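/- arXiv:2210.01221 — 5 statements merged into one kernel-verified Lean document; each statement's English description precedes it below -/
import Mathlib

section
/- Suppose each feasible flow set Pᵢ is nonempty and each Cᵢᵢ is symmetric positive semidefinite. Then x = (x₁,…,x_p) satisfies xᵢ ∈ argmin_{y ∈ Pᵢ} (bᵢ + ½Cᵢᵢy + Σ_{j≠i} Cᵢⱼxⱼ)ᵀy for all i ∈ [p] if and only if there exists v ∈ ℝ^{p(n−1)} such that s = E_{[1,p]}x and x = max(0_{pm}, x + E_{[1,p]}ᵀv − b − Cx), where the maximum is taken componentwise. -/
open Matrix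

variable {ι : Type*} [Fintype ι] {m : ℕ}

/-- The finitely generated cone of a family of vectors. -/
def coneSet (u : ι → (Fin m → ℝ)) : Set (Fin m → ℝ) :=
  {z | ∃ c : ι → ℝ, (∀ i, 0 ≤ c i) ∧ z = ∑ i, c i • u i}

lemma coneSet_convex (u : ι → (Fin m → ℝ)) : Convex ℝ (coneSet u) := by
  rintro z₁ ⟨c₁, hc₁, rfl⟩ z₂ ⟨c₂, hc₂, rfl⟩ a bb ha hb hab
  refine ⟨fun i => a * c₁ i + bb * c₂ i,
    fun i => add_nonneg (mul_nonneg ha (hc₁ i)) (mul_nonneg hb (hc₂ i)), ?_⟩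
  rw [Finset.smul_sum, Finset.smul_sum, ← Finset.sum_add_distrib]
  refine Finset.sum_congr rfl fun i _ => ?_
  simp [add_smul, smul_smul]

lemma coneSet_smul_mem (u : ι → (Fin m → ℝ)) {z : Fin m → ℝ} (hz : z ∈ coneSet u)
    {t : ℝ} (ht : 0 ≤ t) : t • z ∈ coneSet u := by
  obtain ⟨c, hc, rfl⟩ := hz
  exact ⟨fun i => t * c i, fun i => mul_nonneg ht (hc i), by
    rw [Finset.smul_sum]; simp [smul_smul]⟩

lemma coneSet_zero_mem (u : ι → (Fin m → ℝ)) : (0 : Fin m → ℝ) ∈ coneSet u :=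
  ⟨fun _ => 0, fun _ => le_refl _, by simp⟩

lemma coneSet_gen_mem (u : ι → (Fin m → ℝ)) (i₀ : ι) : u i₀ ∈ coneSet u := by
  classical
  exact ⟨fun i => if i = i₀ then 1 else 0, fun i => by positivity, by simp⟩

/-- Conic Carathéodory: any conic combination over `T` is a conic combination over a
linearly independent subset of `T`. -/
lemma cone_carath (u : ι → (Fin m → ℝ)) :
    ∀ (T : Finset ι) (c : ι → ℝ), (∀ i, 0 ≤ c i) →
    ∃ T' : Finset ι, T' ⊆ T ∧ (LinearIndependent ℝ (fun i : T' => u i)) ∧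
      ∃ c' : ι → ℝ, (∀ i, 0 ≤ c' i) ∧ ∑ i ∈ T', c' i • u i = ∑ i ∈ T, c i • u i := by
  classical
  intro T
  induction T using Finset.strongInduction with
  | _ T ih =>
    intro c hc
    by_cases hli : LinearIndependent ℝ (fun i : T => u i)
    · exact ⟨T, le_refl _, hli, c, hc, rfl⟩
    · obtain ⟨μ, hμsum, i₁, hi₁⟩ := Fintype.not_linearIndependent_iff.mp hli
      -- extend μ to ι
      set μ' : ι → ℝ := fun i => if h : i ∈ T then μ ⟨i, h⟩ else 0 with hμ'
      have hμ'sum : ∑ i ∈ T, μ' i • u i = 0 := by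
        rw [← hμsum, ← Finset.sum_coe_sort T (fun i => μ' i • u i)]
        refine Finset.sum_congr rfl fun i _ => ?_
        simp [hμ', i.2]
      have hμ'ne : μ' (i₁ : ι) ≠ 0 := by simp [hμ', i₁.2, hi₁]
      -- get a relation with a positive coefficient somewhere in T
      obtain ⟨ν, hνsum, i₂, hi₂T, hi₂⟩ :
          ∃ ν : ι → ℝ, (∑ i ∈ T, ν i • u i = 0) ∧ ∃ i₂, i₂ ∈ T ∧ 0 < ν i₂ := by
        rcases lt_or_gt_of_ne hμ'ne with hneg | hpos
        · refine ⟨fun i => -μ' i, ?_, i₁, i₁.2, by simpa using hneg⟩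
          simp only [neg_smul, Finset.sum_neg_distrib, hμ'sum, neg_zero]
        · exact ⟨μ', hμ'sum, i₁, i₁.2, hpos⟩
      -- minimize c i / ν i over positive ν i
      set Tpos := T.filter (fun i => 0 < ν i) with hTpos
      have hTposne : Tpos.Nonempty := ⟨i₂, by simp [hTpos, hi₂T, hi₂]⟩
      obtain ⟨i₀, hi₀mem, hi₀min⟩ := Tpos.exists_min_image (fun i => c i / ν i) hTposne
      have hi₀T : i₀ ∈ T := (Finset.mem_filter.mp hi₀mem).1
      have hνi₀ : 0 < ν i₀ := (Finset.mem_filter.mp hi₀mem).2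
      set t := c i₀ / ν i₀ with htdef
      have ht0 : 0 ≤ t := div_nonneg (hc i₀) hνi₀.le
      set c' : ι → ℝ := fun i => if i ∈ T then c i - t * ν i else 0 with hc'
      have hc'nonneg : ∀ i, 0 ≤ c' i := by
        intro i
        by_cases hiT : i ∈ T
        · simp only [hc', hiT, if_true]
          by_cases hνi : 0 < ν i
          · have := hi₀min i (Finset.mem_filter.mpr ⟨hiT, hνi⟩)
            have : t * ν i ≤ c i := by
              rw [htdef]
              calc (c i₀ / ν i₀) * ν i ≤ (c i / ν i) * ν i := by
                    exact mul_le_mul_of_nonneg_right this hνi.le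
                _ = c i := div_mul_cancel₀ _ hνi.ne'
            linarith
          · push_neg at hνi
            nlinarith [hc i]
        · simp [hc', hiT]
      have hc'i₀ : c' i₀ = 0 := by
        simp only [hc', hi₀T, if_true, htdef]
        field_simp
        ring
      have hc'sum : ∑ i ∈ T, c' i • u i = ∑ i ∈ T, c i • u i := by
        have : ∑ i ∈ T, c' i • u i = ∑ i ∈ T, (c i • u i - t • (ν i • u i)) := by
          refine Finset.sum_congr rfl fun i hiT => ?_
          simp [hc', hiT, sub_smul, smul_smul]
        rw [this, Finset.sum_sub_distrib, ← Finset.smul_sum, hνsum, smul_zero, sub_zero]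
      obtain ⟨T', hT'sub, hT'li, c'', hc''nonneg, hc''sum⟩ :=
        ih (T.erase i₀) (Finset.erase_ssubset hi₀T) c' hc'nonneg
      refine ⟨T', hT'sub.trans (Finset.erase_subset _ _), hT'li, c'', hc''nonneg, ?_⟩
      rw [hc''sum, ← hc'sum]
      exact Finset.sum_erase _ (by rw [hc'i₀, zero_smul])

lemma coneSet_isClosed (u : ι → (Fin m → ℝ)) : IsClosed (coneSet u) := by
  classical
  have hrepr : coneSet u = ⋃ T : Finset ι,
      {z | LinearIndependent ℝ (fun i : T => u i) ∧
        ∃ c : ι → ℝ, (∀ i, 0 ≤ c i) ∧ z = ∑ i ∈ T, c i • u i} := by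
    ext z
    constructor
    · rintro ⟨c, hcpos, rfl⟩
      obtain ⟨T', hT'sub, hT'li, c', hc'pos, hc'sum⟩ :=
        cone_carath u Finset.univ c hcpos
      exact Set.mem_iUnion.mpr ⟨T', hT'li, c', hc'pos, hc'sum.symm⟩
    · intro hz
      obtain ⟨T, _, c, hcpos, rfl⟩ := Set.mem_iUnion.mp hz
      refine ⟨fun i => if i ∈ T then c i else 0, fun i => by by_cases h : i ∈ T <;> simp [h, hcpos i], ?_⟩
      simp only [ite_smul, zero_smul]
      rw [Finset.sum_ite_mem, Finset.univ_inter]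
  rw [hrepr]
  refine isClosed_iUnion_of_finite fun T => ?_
  by_cases hli : LinearIndependent ℝ (fun i : T => u i)
  · -- image of nonneg orthant under a closed embedding
    set L : (↥T → ℝ) →ₗ[ℝ] (Fin m → ℝ) :=
      { toFun := fun c => ∑ i : T, c i • u i
        map_add' := fun c₁ c₂ => by
          simp [add_smul, Finset.sum_add_distrib]
        map_smul' := fun a c => by
          simp [smul_smul, Finset.smul_sum] } with hL
    have hker : LinearMap.ker L = ⊥ := by
      rw [LinearMap.ker_eq_bot']
      intro c hcz
      exact funext (Fintype.linearIndependent_iff.mp hli c hcz)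
    have hembed := LinearMap.isClosedEmbedding_of_injective (𝕜 := ℝ) (f := L) hker
    have himg : {z | LinearIndependent ℝ (fun i : T => u i) ∧
        ∃ c : ι → ℝ, (∀ i, 0 ≤ c i) ∧ z = ∑ i ∈ T, c i • u i}
        = L '' {c | ∀ i, 0 ≤ c i} := by
      ext z
      constructor
      · rintro ⟨-, c, hcpos, rfl⟩
        refine ⟨fun i => c i, fun i => hcpos i, ?_⟩
        simp only [hL, LinearMap.coe_mk, AddHom.coe_mk]
        exact Finset.sum_coe_sort T (fun i => c i • u i)
      · rintro ⟨c, hcpos, rfl⟩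
        refine ⟨hli, fun i => if h : i ∈ T then c ⟨i, h⟩ else 0,
          fun i => by
            by_cases h : i ∈ T
            · simpa [h] using hcpos ⟨i, h⟩
            · simp [h], ?_⟩
        simp only [hL, LinearMap.coe_mk, AddHom.coe_mk]
        rw [← Finset.sum_coe_sort T]
        refine Finset.sum_congr rfl fun i _ => ?_
        simp [i.2]
    rw [himg]
    refine hembed.isClosedMap _ ?_
    have : {c : ↥T → ℝ | ∀ i, 0 ≤ c i} = ⋂ i, {c : ↥T → ℝ | 0 ≤ c i} := by
      ext c; simp [Set.mem_iInter]
    rw [this]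
    exact isClosed_iInter fun i => isClosed_le continuous_const (continuous_apply i)
  · convert isClosed_empty
    ext z
    simp [hli]

/-- Farkas-type lemma: if `g` has nonnegative pairing with every vector in the dual of
the cone generated by `u`, then `g` lies in the cone generated by `u`. -/
lemma mem_coneSet_of_dual (u : ι → (Fin m → ℝ)) (g : Fin m → ℝ)
    (h : ∀ dd : Fin m → ℝ, (∀ i, 0 ≤ (u i) ⬝ᵥ dd) → 0 ≤ g ⬝ᵥ dd) : g ∈ coneSet u := by
  classical
  by_contra hg
  obtain ⟨f, t, hfs, hft⟩ :=
    geometric_hahn_banach_closed_point (coneSet_convex u) (coneSet_isClosed u) hg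
  have ht0 : 0 < t := by
    have := hfs 0 (coneSet_zero_mem u)
    simpa using this
  have hfle : ∀ z ∈ coneSet u, f z ≤ 0 := by
    intro z hz
    by_contra hpos
    push_neg at hpos
    have hmem := coneSet_smul_mem u hz (t := (t + 1) / f z)
      (div_nonneg (by linarith) hpos.le)
    have := hfs _ hmem
    rw [_root_.map_smul, smul_eq_mul, div_mul_cancel₀ _ hpos.ne'] at this
    linarith
  -- the separating functional as a vector
  set dd : Fin m → ℝ := fun k => -f (fun j => if k = j then 1 else 0) with hdd
  have hfz : ∀ z : Fin m → ℝ, f z = -(z ⬝ᵥ dd) := by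
    intro z
    conv_lhs => rw [pi_eq_sum_univ z]
    rw [map_sum]
    simp only [_root_.map_smul, smul_eq_mul]
    rw [dotProduct, ← Finset.sum_neg_distrib]
    refine Finset.sum_congr rfl fun k _ => ?_
    simp [hdd]
  have hdual : ∀ i, 0 ≤ (u i) ⬝ᵥ dd := by
    intro i
    have := hfle (u i) (coneSet_gen_mem u i)
    rw [hfz] at this
    linarith
  have hgd := h dd hdual
  rw [hfz] at hft
  linarith

/-- Quadratic cost expansion. -/
lemma cost_expand {m : ℕ} (Cm : Matrix (Fin m) (Fin m) ℝ) (hsym : Cmᵀ = Cm)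
    (bb q z y : Fin m → ℝ) :
    ((bb + (1/2:ℝ) • (Cm *ᵥ y) + q) ⬝ᵥ y) - ((bb + (1/2:ℝ) • (Cm *ᵥ z) + q) ⬝ᵥ z)
      = (bb + q + Cm *ᵥ z) ⬝ᵥ (y - z) + (1/2:ℝ) * ((Cm *ᵥ (y - z)) ⬝ᵥ (y - z)) := by
  have hswap : (Cm *ᵥ y) ⬝ᵥ z = (Cm *ᵥ z) ⬝ᵥ y := by
    calc (Cm *ᵥ y) ⬝ᵥ z = z ⬝ᵥ (Cm *ᵥ y) := dotProduct_comm _ _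
      _ = (z ᵥ* Cm) ⬝ᵥ y := dotProduct_mulVec _ _ _
      _ = (Cmᵀ *ᵥ z) ⬝ᵥ y := by rw [mulVec_transpose]
      _ = (Cm *ᵥ z) ⬝ᵥ y := by rw [hsym]
  simp only [add_dotProduct, smul_dotProduct, dotProduct_sub, mulVec_sub, sub_dotProduct,
    smul_eq_mul]
  linarith [hswap]

/-- Transpose-mulVec pairing. -/
lemma transpose_mulVec_dotProduct {m n : ℕ} (A : Matrix (Fin n) (Fin m) ℝ)
    (v : Fin n → ℝ) (w : Fin m → ℝ) : (Aᵀ *ᵥ v) ⬝ᵥ w = v ⬝ᵥ (A *ᵥ w) := by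
  rw [mulVec_transpose, ← dotProduct_mulVec]

/-- Lemma 1, part 2: Nash equilibrium of the atomic routing
game is characterized by the piecewise linear equations
`s = E_{[1,p]} x`, `x = max(0, x + E_{[1,p]}ᵀ v - b - C x)`. -/
theorem stmt2 (n m p : ℕ) (hm : 0 < m) (hp : 0 < p)
    (E : Matrix (Fin (n + 1)) (Fin m) ℝ)
    (d : Fin p → Fin (n + 1)) (r : Fin p → Fin (n + 1) → ℝ)
    (b : Fin p → Fin m → ℝ)
    (C : Fin p → Fin p → Matrix (Fin m) (Fin m) ℝ)
    (Ered : Fin p → Matrix (Fin n) (Fin m) ℝ)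
    (hEred : ∀ i, Ered i = E.submatrix (d i).succAbove id)
    (s : Fin p → Fin n → ℝ)
    (hs : ∀ i, s i = fun j => r i ((d i).succAbove j))
    (P : Fin p → Set (Fin m → ℝ))
    (hP : ∀ i, P i = {y | Ered i *ᵥ y = s i ∧ ∀ k, 0 ≤ y k})
    (hPne : ∀ i, (P i).Nonempty)
    (hC : ∀ i, (C i i).PosSemidef)
    (cost : Fin p → (Fin p → Fin m → ℝ) → (Fin m → ℝ) → ℝ)
    (hcost : ∀ i x y, cost i x y =
      (b i + (1 / 2 : ℝ) • (C i i *ᵥ y) +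
        ∑ j ∈ Finset.univ.erase i, C i j *ᵥ x j) ⬝ᵥ y)
    (x : Fin p → Fin m → ℝ) :
    (∀ i, x i ∈ P i ∧ ∀ y ∈ P i, cost i x (x i) ≤ cost i x y) ↔
      ∃ v : Fin p → Fin n → ℝ,
        (∀ i, s i = Ered i *ᵥ x i) ∧
        (∀ i k, x i k =
          max 0 (x i k + ((Ered i)ᵀ *ᵥ v i) k - b i k - (∑ j, C i j *ᵥ x j) k)) := by
  classical
  have hsym : ∀ i, (C i i)ᵀ = C i i := by
    intro i
    have h1 := (hC i).1
    ext a bq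
    have h2 := congrFun (congrFun h1 a) bq
    simpa [Matrix.conjTranspose_apply] using h2
  have hpsd : ∀ i (z : Fin m → ℝ), 0 ≤ (C i i *ᵥ z) ⬝ᵥ z := by
    intro i z
    have := (hC i).dotProduct_mulVec_nonneg z
    simpa [dotProduct_comm] using this
  have hgsum : ∀ i, b i + (∑ j ∈ Finset.univ.erase i, C i j *ᵥ x j) + C i i *ᵥ x i
      = b i + ∑ j, C i j *ᵥ x j := by
    intro i
    rw [add_assoc, add_comm (∑ j ∈ Finset.univ.erase i, C i j *ᵥ x j)]
    congr 1
    exact Finset.add_sum_erase Finset.univ (fun j => C i j *ᵥ x j) (Finset.mem_univ i)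
  constructor
  · -- necessity
    intro hopt
    have key : ∀ i, ∃ vi : Fin n → ℝ, ∀ k, x i k =
        max 0 (x i k + ((Ered i)ᵀ *ᵥ vi) k - b i k - (∑ j, C i j *ᵥ x j) k) := by
      intro i
      obtain ⟨hxP, hxopt⟩ := hopt i
      rw [hP] at hxP
      obtain ⟨hxA, hxpos⟩ := hxP
      set A := Ered i with hA
      set gi : Fin m → ℝ := b i + ∑ j, C i j *ᵥ x j with hgi
      -- variational inequality
      have hVI : ∀ dd : Fin m → ℝ, A *ᵥ dd = 0 → (∀ k, x i k = 0 → 0 ≤ dd k) →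
          0 ≤ gi ⬝ᵥ dd := by
        intro dd hAd hdpos
        obtain ⟨t, ht0, htpos⟩ : ∃ t : ℝ, 0 < t ∧ ∀ k, dd k < 0 → t * (-(dd k)) ≤ x i k := by
          set S := Finset.univ.filter (fun k => dd k < 0) with hS
          by_cases hSne : S.Nonempty
          · refine ⟨min 1 (S.inf' hSne (fun k => x i k / (-(dd k)))), ?_, ?_⟩
            · refine lt_min one_pos ?_
              rw [Finset.lt_inf'_iff]
              intro k hk
              have hdk : dd k < 0 := (Finset.mem_filter.mp hk).2
              have hxk : 0 < x i k := by
                rcases lt_or_eq_of_le (hxpos k) with h | h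
                · exact h
                · exact absurd (hdpos k h.symm) (not_le.mpr hdk)
              exact div_pos hxk (by linarith)
            · intro k hdk
              have hkS : k ∈ S := by simp [hS, hdk]
              have hle : min 1 (S.inf' hSne (fun k => x i k / (-(dd k))))
                  ≤ x i k / (-(dd k)) := (min_le_right _ _).trans (Finset.inf'_le _ hkS)
              rw [le_div_iff₀ (by linarith)] at hle
              linarith
          · exact ⟨1, one_pos, fun k hdk => absurd ⟨k, by simp [hS, hdk]⟩ hSne⟩
        have hstep : ∀ t' : ℝ, 0 < t' → t' ≤ t →
            0 ≤ t' * (gi ⬝ᵥ dd) + (1/2:ℝ) * (t' * (t' * ((C i i *ᵥ dd) ⬝ᵥ dd))) := by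
          intro t' ht'0 ht't
          have hy : (x i + t' • dd) ∈ P i := by
            rw [hP]
            refine ⟨?_, ?_⟩
            · rw [Matrix.mulVec_add, Matrix.mulVec_smul, hxA, hAd, smul_zero, add_zero]
            · intro k
              simp only [Pi.add_apply, Pi.smul_apply, smul_eq_mul]
              by_cases hdk : 0 ≤ dd k
              · have : 0 ≤ t' * dd k := mul_nonneg ht'0.le hdk
                linarith [hxpos k]
              · push_neg at hdk
                have h1 := htpos k hdk
                nlinarith
          have hle := hxopt _ hy
          rw [hcost, hcost] at hle
          have hexp := cost_expand (C i i) (hsym i) (b i)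
            (∑ j ∈ Finset.univ.erase i, C i j *ᵥ x j) (x i) (x i + t' • dd)
          rw [add_sub_cancel_left] at hexp
          rw [hgsum i] at hexp
          rw [← hgi] at hexp
          have h0 : 0 ≤ gi ⬝ᵥ (t' • dd) + (1/2:ℝ) * ((C i i *ᵥ (t' • dd)) ⬝ᵥ (t' • dd)) := by
            rw [← hexp]
            linarith
          rw [dotProduct_smul, Matrix.mulVec_smul, smul_dotProduct, dotProduct_smul,
            smul_eq_mul, smul_eq_mul, smul_eq_mul] at h0
          exact h0
        by_contra hneg
        push_neg at hneg
        set Q := (C i i *ᵥ dd) ⬝ᵥ dd with hQdef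
        have hQ : 0 ≤ Q := hpsd i dd
        rcases eq_or_lt_of_le hQ with hQ0 | hQpos
        · have h := hstep t ht0 le_rfl
          rw [← hQ0] at h
          nlinarith
        · set t' := min t ((-(gi ⬝ᵥ dd)) / Q) with ht'def
          have ht'0 : 0 < t' := lt_min ht0 (div_pos (by linarith) hQpos)
          have h := hstep t' ht'0 (min_le_left _ _)
          have ht'le : t' ≤ (-(gi ⬝ᵥ dd)) / Q := min_le_right _ _
          rw [le_div_iff₀ hQpos] at ht'le
          nlinarith
      -- Farkas
      set u : (Fin n ⊕ Fin n) ⊕ Fin m → (Fin m → ℝ) := fun idx =>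
        match idx with
        | Sum.inl (Sum.inl j) => fun k => A j k
        | Sum.inl (Sum.inr j) => fun k => -(A j k)
        | Sum.inr k0 => if x i k0 = 0 then (fun k => if k0 = k then 1 else 0) else 0
        with hu
      have hgmem : gi ∈ coneSet u := by
        apply mem_coneSet_of_dual
        intro dd hdual
        have hAd : A *ᵥ dd = 0 := by
          funext j
          have h1 := hdual (Sum.inl (Sum.inl j))
          have h2 := hdual (Sum.inl (Sum.inr j))
          have e1 : (u (Sum.inl (Sum.inl j))) ⬝ᵥ dd = (A *ᵥ dd) j := by
            simp [hu, Matrix.mulVec, dotProduct]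
          have e2 : (u (Sum.inl (Sum.inr j))) ⬝ᵥ dd = -((A *ᵥ dd) j) := by
            simp [hu, Matrix.mulVec, dotProduct, neg_mul, Finset.sum_neg_distrib]
          rw [e1] at h1; rw [e2] at h2
          simp only [Pi.zero_apply]
          linarith
        have hsign : ∀ k, x i k = 0 → 0 ≤ dd k := by
          intro k hxk
          have h3 := hdual (Sum.inr k)
          have e3 : (u (Sum.inr k)) ⬝ᵥ dd = dd k := by
            simp [hu, hxk, dotProduct]
          rw [e3] at h3; exact h3
        exact hVI dd hAd hsign
      obtain ⟨c, hcpos, hgc⟩ := hgmem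
      set vi : Fin n → ℝ := fun j => c (Sum.inl (Sum.inl j)) - c (Sum.inl (Sum.inr j)) with hvi
      have hwk : ∀ k, gi k - ((Aᵀ) *ᵥ vi) k = if x i k = 0 then c (Sum.inr k) else 0 := by
        intro k
        have hgk := congrFun hgc k
        rw [Finset.sum_apply] at hgk
        have hexpand : ∀ idx, (c idx • u idx) k = c idx * u idx k := fun idx => rfl
        simp only [hexpand] at hgk
        rw [Fintype.sum_sum_type, Fintype.sum_sum_type] at hgk
        have h3rd : ∑ k0 : Fin m, c (Sum.inr k0) * u (Sum.inr k0) k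
            = if x i k = 0 then c (Sum.inr k) else 0 := by
          rw [Finset.sum_eq_single k]
          · simp only [hu]
            by_cases hxk : x i k = 0 <;> simp [hxk]
          · intro k0 _ hk0
            simp only [hu]
            by_cases hxk : x i k0 = 0 <;> simp [hxk, hk0]
          · intro h; exact absurd (Finset.mem_univ k) h
        rw [h3rd] at hgk
        have hAv : ((Aᵀ) *ᵥ vi) k
            = ∑ j, c (Sum.inl (Sum.inl j)) * A j k - ∑ j, c (Sum.inl (Sum.inr j)) * A j k := by
          simp only [Matrix.mulVec, dotProduct, Matrix.transpose_apply, hvi]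
          rw [← Finset.sum_sub_distrib]
          congr 1
          funext j
          ring
        rw [hAv]
        simp only [hu] at hgk
        rw [hgk]
        simp only [mul_neg]
        rw [Finset.sum_neg_distrib]
        ring
      refine ⟨vi, fun k => ?_⟩
      have hw := hwk k
      have hgik : gi k = b i k + (∑ j, C i j *ᵥ x j) k := by rw [hgi]; rfl
      by_cases hxk : x i k = 0
      · rw [if_pos hxk] at hw
        have harg : x i k + ((Ered i)ᵀ *ᵥ vi) k - b i k - (∑ j, C i j *ᵥ x j) k
            = -(c (Sum.inr k)) := by
          rw [hxk]
          rw [← hA]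
          linarith [hgik]
        rw [harg, hxk]
        symm
        rw [max_eq_left]
        linarith [hcpos (Sum.inr k)]
      · rw [if_neg hxk] at hw
        have harg : x i k + ((Ered i)ᵀ *ᵥ vi) k - b i k - (∑ j, C i j *ᵥ x j) k = x i k := by
          rw [← hA]
          linarith [hgik]
        rw [harg]
        exact (max_eq_right (hxpos k)).symm
    choose v hv using key
    refine ⟨v, fun i => ?_, hv⟩
    have hxP := (hopt i).1
    rw [hP] at hxP
    exact hxP.1.symm
  · -- sufficiency
    rintro ⟨v, hsx, hmax⟩ i
    have hxpos : ∀ k, 0 ≤ x i k := fun k => by rw [hmax i k]; exact le_max_left _ _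
    have hxA : Ered i *ᵥ x i = s i := (hsx i).symm
    have hximem : x i ∈ P i := by rw [hP]; exact ⟨hxA, hxpos⟩
    refine ⟨hximem, ?_⟩
    intro y hy
    rw [hP] at hy
    obtain ⟨hyA, hypos⟩ := hy
    set hvec : Fin m → ℝ :=
      fun k => ((Ered i)ᵀ *ᵥ v i) k - b i k - (∑ j, C i j *ᵥ x j) k with hh
    have hcomp : ∀ k, hvec k ≤ 0 ∧ x i k * hvec k = 0 := by
      intro k
      have hm' : x i k = max 0 (x i k + hvec k) := by
        rw [show x i k + hvec k
            = x i k + ((Ered i)ᵀ *ᵥ v i) k - b i k - (∑ j, C i j *ᵥ x j) k from by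
          simp only [hh]; ring]
        exact hmax i k
      rcases le_or_gt (x i k + hvec k) 0 with hle | hlt
      · have hx0 : x i k = 0 := hm'.trans (max_eq_left hle)
        refine ⟨by linarith, by rw [hx0]; ring⟩
      · have h1 : x i k = x i k + hvec k := hm'.trans (max_eq_right hlt.le)
        have h0 : hvec k = 0 := by linarith
        simp [h0]
    rw [hcost, hcost]
    have hexp := cost_expand (C i i) (hsym i) (b i)
      (∑ j ∈ Finset.univ.erase i, C i j *ᵥ x j) (x i) y
    rw [hgsum i] at hexp
    have hquad : 0 ≤ (C i i *ᵥ (y - x i)) ⬝ᵥ (y - x i) := hpsd i _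
    have hlin : 0 ≤ (b i + ∑ j, C i j *ᵥ x j) ⬝ᵥ (y - x i) := by
      have hgdecomp : (b i + ∑ j, C i j *ᵥ x j) = ((Ered i)ᵀ *ᵥ v i) - hvec := by
        funext k
        simp only [Pi.add_apply, Pi.sub_apply, hh]
        ring
      rw [hgdecomp, sub_dotProduct]
      have hAterm : ((Ered i)ᵀ *ᵥ v i) ⬝ᵥ (y - x i) = 0 := by
        rw [transpose_mulVec_dotProduct, Matrix.mulVec_sub, hyA, hxA, sub_self, dotProduct_zero]
      rw [hAterm]
      have h1 : hvec ⬝ᵥ x i = 0 :=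
        Finset.sum_eq_zero fun k _ => by have := (hcomp k).2; linarith [this]
      have h2 : hvec ⬝ᵥ y ≤ 0 :=
        Finset.sum_nonpos fun k _ => mul_nonpos_of_nonpos_of_nonneg (hcomp k).1 (hypos k)
      rw [dotProduct_sub]
      linarith
    linarith [hexp, hquad, hlin]
end

section
/- Let A ∈ ℝ^{k×m}, s ∈ ℝ^k, and P = {y ∈ ℝ^m : Ay = s, y ≥ 0}. Suppose P contains a vector with all entries strictly positive, let Q ∈ ℝ^{m×m} be symmetric positive semidefinite, c ∈ ℝ^m, and λ > 0. If x minimizes (c + ½Qy)ᵀy + λ·Σₖ yₖ ln(yₖ) over P, then every entry of x is strictly positive. -/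
open Matrix

/-- any minimizer of the entropy-regularized problem over the
polyhedron `P` (which contains a strictly positive point) has all entries
strictly positive. -/
theorem stmt6 (k m : ℕ) (A : Matrix (Fin k) (Fin m) ℝ) (s : Fin k → ℝ)
    (P : Set (Fin m → ℝ)) (hP : P = {y | A *ᵥ y = s ∧ ∀ j, 0 ≤ y j})
    (hpos : ∃ y ∈ P, ∀ j, 0 < y j)
    (Q : Matrix (Fin m) (Fin m) ℝ) (hQ : Q.PosSemidef)
    (c : Fin m → ℝ) (lam : ℝ) (hlam : 0 < lam)
    (f : (Fin m → ℝ) → ℝ)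
    (hf : ∀ y, f y = (c + (1 / 2 : ℝ) • (Q *ᵥ y)) ⬝ᵥ y +
      lam * ∑ j, y j * Real.log (y j))
    (x : Fin m → ℝ)
    (hx : x ∈ P ∧ ∀ y ∈ P, f x ≤ f y) :
    ∀ j, 0 < x j := by
  obtain ⟨z, hzP, hzpos⟩ := hpos
  intro j0
  by_contra hcon
  push_neg at hcon
  have hxP := hx.1
  rw [hP] at hxP hzP
  have hx0 : x j0 = 0 := le_antisymm hcon (hxP.2 j0)
  set d : Fin m → ℝ := z - x with hd
  -- quadratic part expansion
  set a : ℝ := (c ⬝ᵥ d) + (1/2)*((Q *ᵥ x) ⬝ᵥ d) + (1/2)*((Q *ᵥ d) ⬝ᵥ x) with ha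
  set b : ℝ := (1/2)*((Q *ᵥ d) ⬝ᵥ d) with hb
  have hq : ∀ t : ℝ, (c + (1/2:ℝ) • (Q *ᵥ (x + t • d))) ⬝ᵥ (x + t • d)
      = (c + (1/2:ℝ) • (Q *ᵥ x)) ⬝ᵥ x + t * a + t^2 * b := by
    intro t
    simp only [Matrix.mulVec_add, Matrix.mulVec_smul, dotProduct_add, add_dotProduct,
      smul_dotProduct, dotProduct_smul, smul_eq_mul, smul_add, ha, hb]
    ring
  set E : (Fin m → ℝ) → ℝ := fun y => ∑ j, y j * Real.log (y j) with hE
  set C : ℝ := |a| + |b| + lam * (E z - E x) with hC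
  set t : ℝ := min 1 (Real.exp (-(C+1)/(lam * z j0))) with ht
  have ht0 : 0 < t := lt_min one_pos (Real.exp_pos _)
  have ht1 : t ≤ 1 := min_le_left _ _
  -- the point y t
  set y : Fin m → ℝ := x + t • d with hy
  have hyz : ∀ i, y i = (1-t) * x i + t * z i := by
    intro i; simp [hy, hd]; ring
  have hyP : y ∈ P := by
    rw [hP]
    constructor
    · have : A *ᵥ y = A *ᵥ x + t • (A *ᵥ z - A *ᵥ x) := by
        simp [hy, hd, Matrix.mulVec_add, Matrix.mulVec_smul, Matrix.mulVec_sub]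
      rw [this, hxP.1, hzP.1]; simp
    · intro i
      rw [hyz i]
      have := hxP.2 i
      have := (hzpos i).le
      nlinarith
  -- entropy bound
  have hent : ∀ i, y i * Real.log (y i) ≤
      (1-t) * (x i * Real.log (x i)) + t * (z i * Real.log (z i)) := by
    intro i
    have hcx : ConvexOn ℝ (Set.Ici (0:ℝ)) (fun u => u * Real.log u) := Real.convexOn_mul_log
    have := hcx.2 (Set.mem_Ici.mpr (hxP.2 i)) (Set.mem_Ici.mpr (hzpos i).le)
      (by linarith : (0:ℝ) ≤ 1 - t) ht0.le (by ring)
    simpa [smul_eq_mul, hyz i] using this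
  -- at j0 the exact value
  have hj0 : y j0 * Real.log (y j0) =
      t * (z j0 * Real.log (z j0)) + t * z j0 * Real.log t := by
    rw [hyz j0, hx0]
    have : Real.log (t * z j0) = Real.log t + Real.log (z j0) :=
      Real.log_mul (ne_of_gt ht0) (ne_of_gt (hzpos j0))
    rw [mul_zero, zero_add, this]; ring
  have hEy : E y ≤ (1-t) * E x + t * E z + t * z j0 * Real.log t := by
    have hsum : E y = ∑ i, y i * Real.log (y i) := rfl
    have key : ∀ i, y i * Real.log (y i) ≤
        ((1-t) * (x i * Real.log (x i)) + t * (z i * Real.log (z i)))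
        + (if i = j0 then t * z j0 * Real.log t else 0) := by
      intro i
      by_cases h : i = j0
      · subst h
        simp only [if_pos rfl, hj0, hx0]
        simp
      · simp only [if_neg h, add_zero]
        exact hent i
    calc E y ≤ ∑ i, (((1-t) * (x i * Real.log (x i)) + t * (z i * Real.log (z i)))
        + (if i = j0 then t * z j0 * Real.log t else 0)) := Finset.sum_le_sum (fun i _ => key i)
      _ = (1-t) * E x + t * E z + t * z j0 * Real.log t := by
        rw [Finset.sum_add_distrib, Finset.sum_add_distrib, Finset.sum_ite_eq' Finset.univ j0]
        simp [hE, Finset.mul_sum]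
  -- log t bound
  have hlogt : Real.log t ≤ -(C+1)/(lam * z j0) := by
    calc Real.log t ≤ Real.log (Real.exp (-(C+1)/(lam * z j0))) :=
          Real.log_le_log ht0 (min_le_right _ _)
      _ = -(C+1)/(lam * z j0) := Real.log_exp _
  have hlz : 0 < lam * z j0 := mul_pos hlam (hzpos j0)
  have hmain : lam * (t * z j0 * Real.log t) ≤ t * (-(C+1)) := by
    have h1 : lam * z j0 * Real.log t ≤ -(C+1) := by
      have := mul_le_mul_of_nonneg_left hlogt hlz.le
      rwa [mul_div_cancel₀ _ (ne_of_gt hlz)] at this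
    calc lam * (t * z j0 * Real.log t) = t * (lam * z j0 * Real.log t) := by ring
      _ ≤ t * (-(C+1)) := mul_le_mul_of_nonneg_left h1 ht0.le
  -- combine
  have hfle : f y ≤ f x + t * (C + lam * z j0 * Real.log t) := by
    rw [hf y, hf x]
    have hqy := hq t
    have h2 : t * a ≤ t * |a| := mul_le_mul_of_nonneg_left (le_abs_self a) ht0.le
    have h3 : t^2 * b ≤ t * |b| := by
      have : t^2 * b ≤ t^2 * |b| := mul_le_mul_of_nonneg_left (le_abs_self b) (sq_nonneg t)
      have ht2 : t^2 ≤ t := by nlinarith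
      have h4 : t^2 * |b| ≤ t * |b| := mul_le_mul_of_nonneg_right ht2 (abs_nonneg b)
      linarith
    have h5 : lam * E y ≤ lam * ((1-t) * E x + t * E z + t * z j0 * Real.log t) :=
      mul_le_mul_of_nonneg_left hEy hlam.le
    have : (c + (1/2:ℝ) • (Q *ᵥ y)) ⬝ᵥ y + lam * E y ≤
        (c + (1/2:ℝ) • (Q *ᵥ x)) ⬝ᵥ x + t * |a| + t * |b|
        + lam * ((1-t) * E x + t * E z + t * z j0 * Real.log t) := by
      rw [hy, hqy]; rw [hy] at h5
      exact add_le_add (add_le_add (add_le_add le_rfl h2) h3) h5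
    calc (c + (1/2:ℝ) • (Q *ᵥ y)) ⬝ᵥ y + lam * E y
        ≤ (c + (1/2:ℝ) • (Q *ᵥ x)) ⬝ᵥ x + t * |a| + t * |b|
          + lam * ((1-t) * E x + t * E z + t * z j0 * Real.log t) := this
      _ = (c + (1/2:ℝ) • (Q *ᵥ x)) ⬝ᵥ x + lam * E x
          + t * (C + lam * z j0 * Real.log t) := by rw [hC]; ring
  have hneg : t * (C + lam * z j0 * Real.log t) < 0 := by
    have : C + lam * z j0 * Real.log t ≤ -1 := by
      have h1 : lam * z j0 * Real.log t ≤ -(C+1) := by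
        have := mul_le_mul_of_nonneg_left hlogt hlz.le
        rwa [mul_div_cancel₀ _ (ne_of_gt hlz)] at this
      linarith
    nlinarith
  have := hx.2 y hyP
  linarith
end

section
/- Suppose each Pᵢ contains a vector with all entries strictly positive, each Cᵢᵢ is symmetric positive semidefinite, and λ > 0. Then x = (x₁,…,x_p) satisfies xᵢ ∈ argmin_{y ∈ Pᵢ} (bᵢ + ½Cᵢᵢy + Σ_{j≠i} Cᵢⱼxⱼ)ᵀy + λ·yᵀln(y) for all i ∈ [p] if and only if there exists v ∈ ℝ^{p(n−1)} such that s = E_{[1,p]}x and x = exp((1/λ)(E_{[1,p]}ᵀv − b − Cx) − 1_{pm}), where exp and ln act componentwise and yᵀln(y) = Σₖ yₖ ln(yₖ) with the convention 0·ln(0) = 0. -/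
/-!
Player `i`'s cost is `entropicQuadratic aᵢ Cᵢᵢ λ` with `aᵢ = bᵢ + ∑_{j ≠ i} Cᵢⱼ xⱼ`, a convex
function, so the equilibrium conditions decouple into `p` convex programs over the polyhedra `Pᵢ`.
Since the entropy has slope `-∞` at a vanishing coordinate and `Pᵢ` contains a strictly positive
point, a minimizer lies in the open orthant. There minimality on the affine slice says that the
gradient `aᵢ + Cᵢᵢ xᵢ + λ (ln xᵢ + 1)` is orthogonal to `ker Eᵢ`, i.e. equals `Eᵢᵀ vᵢ`, and solving
for `xᵢ` gives the exponential formula. Conversely, that formula forces `xᵢ > 0`, and the gradient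
inequality of the convex cost shows that `xᵢ` is a minimizer.
-/

open Matrix Real

theorem Matrix.exists_transpose_mulVec_eq_of_forall_mulVec_eq_zero {K ι κ : Type*} [Field K]
    [Fintype ι] [Fintype κ] (A : Matrix κ ι K) {w : ι → K}
    (hw : ∀ z, A *ᵥ z = 0 → w ⬝ᵥ z = 0) : ∃ v, Aᵀ *ᵥ v = w := by
  classical
  have hmem : dotProductEquiv K ι w ∈ LinearMap.range A.mulVecLin.dualMap := by
    rw [LinearMap.range_dualMap_eq_dualAnnihilator_ker, Submodule.mem_dualAnnihilator]
    exact hw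
  obtain ⟨g, hg⟩ := hmem
  obtain ⟨v, rfl⟩ := (dotProductEquiv K κ).surjective g
  refine ⟨v, (dotProductEquiv K ι).injective (LinearMap.ext fun z => ?_)⟩
  rw [← hg]
  simp [mulVec_transpose, dotProduct_mulVec]

theorem Matrix.IsSymm.dotProduct_mulVec_comm {R ι : Type*} [CommSemiring R] [Fintype ι]
    {Q : Matrix ι ι R} (hQ : Q.IsSymm) (x y : ι → R) : x ⬝ᵥ Q *ᵥ y = y ⬝ᵥ Q *ᵥ x := by
  rw [dotProduct_mulVec, ← mulVec_transpose, hQ.eq, dotProduct_comm]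

theorem Matrix.IsSymm.dotProduct_mulVec_add_smul {R ι : Type*} [CommRing R] [Fintype ι]
    {Q : Matrix ι ι R} (hQ : Q.IsSymm) (x d : ι → R) (t : R) :
    (x + t • d) ⬝ᵥ Q *ᵥ (x + t • d) =
      x ⬝ᵥ Q *ᵥ x + 2 * t * (d ⬝ᵥ Q *ᵥ x) + t ^ 2 * (d ⬝ᵥ Q *ᵥ d) := by
  simp only [mulVec_add, mulVec_smul, add_dotProduct, dotProduct_add, smul_dotProduct,
    dotProduct_smul, smul_eq_mul, hQ.dotProduct_mulVec_comm x d]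
  ring

theorem Real.add_one_mul_sub_le_mul_log_sub {x y : ℝ} (hx : 0 < x) (hy : 0 ≤ y) :
    (log x + 1) * (y - x) ≤ y * log y - x * log x := by
  rcases hy.eq_or_lt with rfl | hy
  · simp only [log_zero, mul_zero, zero_sub]
    nlinarith
  · have h := log_le_sub_one_of_pos (div_pos hx hy)
    rw [log_div hx.ne' hy.ne'] at h
    have hmul := mul_le_mul_of_nonneg_left h hy.le
    have hxy : y * (x / y - 1) = x - y := by field_simp
    linarith

section EntropicQuadratic

variable {ι : Type*} [Fintype ι]

/-- Uses `Real.log 0 = 0`, so that `y k * log (y k)` encodes the convention `0 ln 0 = 0`. -/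
noncomputable def entropicQuadratic (a : ι → ℝ) (Q : Matrix ι ι ℝ) (lam : ℝ) (y : ι → ℝ) : ℝ :=
  a ⬝ᵥ y + (1 / 2) * (y ⬝ᵥ Q *ᵥ y) + lam * ∑ k, y k * log (y k)

noncomputable def entropicQuadraticGrad (a : ι → ℝ) (Q : Matrix ι ι ℝ) (lam : ℝ)
    (x : ι → ℝ) : ι → ℝ :=
  fun k => a k + (Q *ᵥ x) k + lam * (log (x k) + 1)

variable {a : ι → ℝ} {Q : Matrix ι ι ℝ} {lam : ℝ}

theorem entropicQuadratic_add_grad_dotProduct_le (hQ : Q.PosSemidef) (hlam : 0 ≤ lam)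
    {x y : ι → ℝ} (hx : ∀ k, 0 < x k) (hy : ∀ k, 0 ≤ y k) :
    entropicQuadratic a Q lam x + entropicQuadraticGrad a Q lam x ⬝ᵥ (y - x) ≤
      entropicQuadratic a Q lam y := by
  have hquad : (y - x) ⬝ᵥ Q *ᵥ x ≤ 1 / 2 * (y ⬝ᵥ Q *ᵥ y) - 1 / 2 * (x ⬝ᵥ Q *ᵥ x) := by
    have hexp := (isHermitian_iff_isSymm.1 hQ.isHermitian).dotProduct_mulVec_add_smul x (y - x) 1
    rw [one_smul, add_sub_cancel] at hexp
    have hnonneg := hQ.dotProduct_mulVec_nonneg (y - x)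
    rw [star_trivial] at hnonneg
    linarith
  have hent : ∑ k, (log (x k) + 1) * (y k - x k) ≤
      ∑ k, y k * log (y k) - ∑ k, x k * log (x k) := by
    rw [← Finset.sum_sub_distrib]
    exact Finset.sum_le_sum fun k _ => add_one_mul_sub_le_mul_log_sub (hx k) (hy k)
  have hgrad : entropicQuadraticGrad a Q lam x ⬝ᵥ (y - x) = a ⬝ᵥ (y - x) +
      (y - x) ⬝ᵥ Q *ᵥ x + lam * ∑ k, (log (x k) + 1) * (y k - x k) := by
    rw [dotProduct_comm (y - x)]
    simp only [entropicQuadraticGrad, dotProduct, Pi.sub_apply, Finset.mul_sum,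
      ← Finset.sum_add_distrib]
    exact Finset.sum_congr rfl fun k _ => by ring
  rw [entropicQuadratic, entropicQuadratic, hgrad, dotProduct_sub]
  nlinarith [mul_le_mul_of_nonneg_left hent hlam]

theorem hasDerivAt_entropicQuadratic_add_smul (hQ : Q.IsSymm) {x : ι → ℝ}
    (hx : ∀ k, x k ≠ 0) (z : ι → ℝ) :
    HasDerivAt (fun t : ℝ => entropicQuadratic a Q lam (x + t • z))
      (entropicQuadraticGrad a Q lam x ⬝ᵥ z) 0 := by
  have hlin : HasDerivAt (fun t : ℝ => a ⬝ᵥ (x + t • z)) (a ⬝ᵥ z) 0 := by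
    simp only [dotProduct_add, dotProduct_smul, smul_eq_mul]
    simpa using ((hasDerivAt_id (0 : ℝ)).mul_const (a ⬝ᵥ z)).const_add (a ⬝ᵥ x)
  have hquad : HasDerivAt (fun t : ℝ => (x + t • z) ⬝ᵥ Q *ᵥ (x + t • z))
      (2 * (z ⬝ᵥ Q *ᵥ x)) 0 := by
    simp only [hQ.dotProduct_mulVec_add_smul, mul_right_comm _ _ (z ⬝ᵥ Q *ᵥ x)]
    exact ((((hasDerivAt_id (0 : ℝ)).const_mul (2 * (z ⬝ᵥ Q *ᵥ x))).const_add
      (x ⬝ᵥ Q *ᵥ x)).fun_add ((hasDerivAt_pow 2 (0 : ℝ)).mul_const (z ⬝ᵥ Q *ᵥ z))).congr_deriv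
      (by simp)
  have hent : ∀ k, HasDerivAt (fun t : ℝ => (x + t • z) k * log ((x + t • z) k))
      ((log (x k) + 1) * z k) 0 := by
    intro k
    have hline : HasDerivAt (fun t : ℝ => (x + t • z) k) (z k) 0 := by
      simpa using ((hasDerivAt_id (0 : ℝ)).mul_const (z k)).const_add (x k)
    simpa [Function.comp_def] using (hasDerivAt_mul_log (by simpa using hx k)).comp 0 hline
  refine ((hlin.fun_add (hquad.const_mul (1 / 2))).fun_add
    ((HasDerivAt.fun_sum fun k _ => hent k).const_mul lam)).congr_deriv ?_
  rw [dotProduct_comm z]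
  simp only [entropicQuadraticGrad, dotProduct, Finset.mul_sum, ← Finset.sum_add_distrib]
  exact Finset.sum_congr rfl fun k _ => by ring

theorem sum_mul_log_add_smul_sub_le {x y : ι → ℝ} (hx : ∀ k, 0 ≤ x k) (hy : ∀ k, 0 ≤ y k)
    {k₀ : ι} (hk₀ : x k₀ = 0) {t : ℝ} (ht₀ : 0 < t) (ht₁ : t ≤ 1) :
    ∑ k, (x + t • (y - x)) k * log ((x + t • (y - x)) k) ≤
      ∑ k, x k * log (x k) +
        t * (∑ k, y k * log (y k) - ∑ k, x k * log (x k) + y k₀ * log t) := by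
  classical
  have hcoord : ∀ k, (x + t • (y - x)) k * log ((x + t • (y - x)) k) ≤
      x k * log (x k) + t * (y k * log (y k) - x k * log (x k)) +
        if k = k₀ then t * (y k₀ * log t) else 0 := by
    intro k
    split_ifs with hk
    · subst hk
      simp only [Pi.add_apply, Pi.smul_apply, Pi.sub_apply, hk₀, smul_eq_mul, sub_zero, zero_add,
        log_zero, mul_zero]
      rcases (hy k).eq_or_lt with hy0 | hy0
      · simp [← hy0]
      · rw [log_mul ht₀.ne' hy0.ne']
        exact le_of_eq (by ring)
    · have hconv := convexOn_mul_log.2 (Set.mem_Ici.2 (hx k)) (Set.mem_Ici.2 (hy k))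
        (sub_nonneg.2 ht₁) ht₀.le (sub_add_cancel 1 t)
      simp only [smul_eq_mul] at hconv
      have hseg : (x + t • (y - x)) k = (1 - t) * x k + t * y k := by
        simp only [Pi.add_apply, Pi.smul_apply, Pi.sub_apply, smul_eq_mul]
        ring
      rw [hseg]
      linarith
  refine (Finset.sum_le_sum fun k _ => hcoord k).trans_eq ?_
  rw [Finset.sum_add_distrib, Finset.sum_ite_eq', if_pos (Finset.mem_univ _),
    Finset.sum_add_distrib, ← Finset.mul_sum, Finset.sum_sub_distrib]
  ring

theorem entropicQuadratic_add_smul_sub_le (hQ : Q.PosSemidef) (hlam : 0 ≤ lam) {x y : ι → ℝ}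
    (hx : ∀ k, 0 ≤ x k) (hy : ∀ k, 0 ≤ y k) {k₀ : ι} (hk₀ : x k₀ = 0) {t : ℝ} (ht₀ : 0 < t)
    (ht₁ : t ≤ 1) :
    entropicQuadratic a Q lam (x + t • (y - x)) ≤ entropicQuadratic a Q lam x +
      t * (entropicQuadratic a Q lam y - entropicQuadratic a Q lam x + lam * (y k₀ * log t)) := by
  have hlin : a ⬝ᵥ (x + t • (y - x)) = a ⬝ᵥ x + t * (a ⬝ᵥ y - a ⬝ᵥ x) := by
    simp only [dotProduct_add, dotProduct_smul, dotProduct_sub, smul_eq_mul]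
  have hquad : (x + t • (y - x)) ⬝ᵥ Q *ᵥ (x + t • (y - x)) ≤
      x ⬝ᵥ Q *ᵥ x + t * (y ⬝ᵥ Q *ᵥ y - x ⬝ᵥ Q *ᵥ x) := by
    have hsymm := isHermitian_iff_isSymm.1 hQ.isHermitian
    have hexp₁ := hsymm.dotProduct_mulVec_add_smul x (y - x) 1
    rw [one_smul, add_sub_cancel] at hexp₁
    have hnonneg := hQ.dotProduct_mulVec_nonneg (y - x)
    rw [star_trivial] at hnonneg
    have hsq : t ^ 2 * ((y - x) ⬝ᵥ Q *ᵥ (y - x)) ≤ t * ((y - x) ⬝ᵥ Q *ᵥ (y - x)) :=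
      mul_le_mul_of_nonneg_right (by nlinarith) hnonneg
    rw [hsymm.dotProduct_mulVec_add_smul]
    nlinarith
  have hent := mul_le_mul_of_nonneg_left (sum_mul_log_add_smul_sub_le hx hy hk₀ ht₀ ht₁) hlam
  rw [entropicQuadratic, entropicQuadratic, entropicQuadratic, hlin]
  nlinarith

theorem entropicQuadratic_pos_of_isMinOn (hQ : Q.PosSemidef) (hlam : 0 < lam)
    {S : Set (ι → ℝ)} (hS : Convex ℝ S) (hS₀ : ∀ y ∈ S, ∀ k, 0 ≤ y k) {x y : ι → ℝ}
    (hx : x ∈ S) (hy : y ∈ S) (hy₀ : ∀ k, 0 < y k)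
    (hmin : IsMinOn (entropicQuadratic a Q lam) S x) (k₀ : ι) : 0 < x k₀ := by
  refine (hS₀ x hx k₀).lt_of_ne' fun hk₀ => ?_
  set c := entropicQuadratic a Q lam y - entropicQuadratic a Q lam x
  -- `log t` is so negative that the entropy gained at the coordinate `k₀` outweighs `c`
  set t := exp (-(|c| + 1) / (lam * y k₀))
  have ht₀ : 0 < t := exp_pos _
  have ht₁ : t ≤ 1 :=
    exp_le_one_iff.2 (div_nonpos_of_nonpos_of_nonneg (by linarith [abs_nonneg c])
      (mul_pos hlam (hy₀ k₀)).le)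
  have hlog : lam * (y k₀ * log t) = -(|c| + 1) := by
    have hy₀k₀ := (hy₀ k₀).ne'
    rw [log_exp]
    field_simp
  have hle := entropicQuadratic_add_smul_sub_le (a := a) hQ hlam.le (hS₀ x hx) (hS₀ y hy) hk₀
    ht₀ ht₁
  have hge := isMinOn_iff.1 hmin _ (hS.add_smul_sub_mem hx hy ⟨ht₀.le, ht₁⟩)
  rw [hlog] at hle
  nlinarith [mul_neg_of_pos_of_neg ht₀ (by linarith [le_abs_self c] : c + -(|c| + 1) < 0)]

theorem entropicQuadraticGrad_dotProduct_eq_zero {κ : Type*} [Fintype κ] (hQ : Q.IsSymm)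
    {A : Matrix κ ι ℝ} {s : κ → ℝ} {x z : ι → ℝ} (hx : ∀ k, 0 < x k) (hAx : A *ᵥ x = s)
    (hmin : IsMinOn (entropicQuadratic a Q lam) {y | A *ᵥ y = s ∧ ∀ k, 0 ≤ y k} x)
    (hz : A *ᵥ z = 0) : entropicQuadraticGrad a Q lam x ⬝ᵥ z = 0 := by
  have hpos : ∀ᶠ t in nhds (0 : ℝ), ∀ k, 0 < (x + t • z) k := by
    refine Filter.eventually_all.2 fun k => ?_
    have hcont : Continuous fun t : ℝ => (x + t • z) k := by fun_prop
    exact hcont.continuousAt.eventually (lt_mem_nhds (by simpa using hx k))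
  have hloc : IsLocalMin (fun t : ℝ => entropicQuadratic a Q lam (x + t • z)) 0 := by
    filter_upwards [hpos] with t ht
    simpa using isMinOn_iff.1 hmin _
      ⟨by simp [mulVec_add, mulVec_smul, hAx, hz], fun k => (ht k).le⟩
  exact hloc.hasDerivAt_eq_zero (hasDerivAt_entropicQuadratic_add_smul hQ (fun k => (hx k).ne') z)

end EntropicQuadratic

theorem Real.eq_exp_inv_mul_sub_sub_one_iff {lam u c w : ℝ} (hlam : lam ≠ 0) :
    u = exp (lam⁻¹ * (w - c) - 1) ↔ 0 < u ∧ c + lam * (log u + 1) = w := by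
  constructor
  · rintro rfl
    refine ⟨exp_pos _, ?_⟩
    rw [log_exp]
    field_simp
    ring
  · rintro ⟨hu, rfl⟩
    rw [add_sub_cancel_left, ← mul_assoc, inv_mul_cancel₀ hlam, one_mul, add_sub_cancel_right,
      exp_log hu]

theorem Matrix.convex_setOf_mulVec_eq_and_nonneg {ι κ : Type*} [Fintype ι] (A : Matrix κ ι ℝ)
    (s : κ → ℝ) : Convex ℝ {y | A *ᵥ y = s ∧ ∀ k, 0 ≤ y k} := by
  rintro x ⟨hAx, hx⟩ y ⟨hAy, hy⟩ a b ha hb hab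
  refine ⟨by rw [mulVec_add, mulVec_smul, mulVec_smul, hAx, hAy, ← add_smul, hab, one_smul],
    fun k => ?_⟩
  simp only [Pi.add_apply, Pi.smul_apply, smul_eq_mul]
  exact add_nonneg (mul_nonneg ha (hx k)) (mul_nonneg hb (hy k))

theorem isMinOn_entropicQuadratic_iff {ι κ : Type*} [Fintype ι] [Fintype κ] {a : ι → ℝ}
    {Q : Matrix ι ι ℝ} {lam : ℝ} {A : Matrix κ ι ℝ} {s : κ → ℝ} (hQ : Q.PosSemidef)
    (hlam : 0 < lam) {y₀ : ι → ℝ} (hAy₀ : A *ᵥ y₀ = s) (hy₀ : ∀ k, 0 < y₀ k) (x : ι → ℝ) :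
    (x ∈ {y | A *ᵥ y = s ∧ ∀ k, 0 ≤ y k} ∧
        IsMinOn (entropicQuadratic a Q lam) {y | A *ᵥ y = s ∧ ∀ k, 0 ≤ y k} x) ↔
      ∃ v, A *ᵥ x = s ∧
        ∀ k, x k = exp (lam⁻¹ * ((Aᵀ *ᵥ v) k - a k - (Q *ᵥ x) k) - 1) := by
  simp only [sub_sub, Real.eq_exp_inv_mul_sub_sub_one_iff hlam.ne']
  constructor
  · rintro ⟨hxS, hmin⟩
    have hpos := entropicQuadratic_pos_of_isMinOn hQ hlam (A.convex_setOf_mulVec_eq_and_nonneg s)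
      (fun y hy => hy.2) hxS ⟨hAy₀, fun k => (hy₀ k).le⟩ hy₀ hmin
    obtain ⟨v, hv⟩ := A.exists_transpose_mulVec_eq_of_forall_mulVec_eq_zero fun z hz =>
      entropicQuadraticGrad_dotProduct_eq_zero (isHermitian_iff_isSymm.1 hQ.isHermitian) hpos
        hxS.1 hmin hz
    exact ⟨v, hxS.1, fun k => ⟨hpos k, (congrFun hv k).symm⟩⟩
  · rintro ⟨v, hAx, hx⟩
    have hgrad : entropicQuadraticGrad a Q lam x = Aᵀ *ᵥ v := funext fun k => (hx k).2
    refine ⟨⟨hAx, fun k => (hx k).1.le⟩, isMinOn_iff.2 fun y hy => ?_⟩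
    calc entropicQuadratic a Q lam x
        = entropicQuadratic a Q lam x + entropicQuadraticGrad a Q lam x ⬝ᵥ (y - x) := by
          rw [hgrad, mulVec_transpose, ← dotProduct_mulVec, mulVec_sub, hy.1, hAx, sub_self,
            dotProduct_zero, add_zero]
      _ ≤ entropicQuadratic a Q lam y :=
          entropicQuadratic_add_grad_dotProduct_le hQ hlam.le (fun k => (hx k).1) hy.2

theorem stmt7_general (n m p : ℕ)
    (b : Fin p → Fin m → ℝ)
    (C : Fin p → Fin p → Matrix (Fin m) (Fin m) ℝ)
    (Ered : Fin p → Matrix (Fin n) (Fin m) ℝ)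
    (s : Fin p → Fin n → ℝ)
    (P : Fin p → Set (Fin m → ℝ))
    (hP : ∀ i, P i = {y | Ered i *ᵥ y = s i ∧ ∀ k, 0 ≤ y k})
    (hPpos : ∀ i, ∃ y ∈ P i, ∀ k, 0 < y k)
    (hC : ∀ i, (C i i).PosSemidef)
    (lam : ℝ) (hlam : 0 < lam)
    (cost : Fin p → (Fin p → Fin m → ℝ) → (Fin m → ℝ) → ℝ)
    (hcost : ∀ i x y, cost i x y =
      (b i + (1 / 2 : ℝ) • (C i i *ᵥ y) +
        ∑ j ∈ Finset.univ.erase i, C i j *ᵥ x j) ⬝ᵥ y +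
      lam * ∑ k, y k * Real.log (y k))
    (x : Fin p → Fin m → ℝ) :
    (∀ i, x i ∈ P i ∧ ∀ y ∈ P i, cost i x (x i) ≤ cost i x y) ↔
      ∃ v : Fin p → Fin n → ℝ,
        (∀ i, s i = Ered i *ᵥ x i) ∧
        (∀ i k, x i k = Real.exp (lam⁻¹ *
          (((Ered i)ᵀ *ᵥ v i) k - b i k - (∑ j, C i j *ᵥ x j) k) - 1)) := by
  set a : Fin p → Fin m → ℝ := fun i => b i + ∑ j ∈ Finset.univ.erase i, C i j *ᵥ x j
  have hcost_eq : ∀ i, cost i x = entropicQuadratic (a i) (C i i) lam := by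
    intro i
    funext y
    rw [hcost, entropicQuadratic]
    simp only [a, add_dotProduct, smul_dotProduct, smul_eq_mul, dotProduct_comm (C i i *ᵥ y)]
    ring
  have harg : ∀ i (w : Fin m → ℝ) k,
      w k - a i k - (C i i *ᵥ x i) k = w k - b i k - (∑ j, C i j *ᵥ x j) k := by
    intro i w k
    rw [← Finset.add_sum_erase _ _ (Finset.mem_univ i)]
    simp only [a, Pi.add_apply]
    ring
  have hplayer : ∀ i, (x i ∈ P i ∧ ∀ y ∈ P i, cost i x (x i) ≤ cost i x y) ↔
      ∃ v : Fin n → ℝ, s i = Ered i *ᵥ x i ∧ ∀ k, x i k =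
        Real.exp (lam⁻¹ * (((Ered i)ᵀ *ᵥ v) k - b i k - (∑ j, C i j *ᵥ x j) k) - 1) := by
    intro i
    obtain ⟨y₀, hy₀, hy₀pos⟩ := hPpos i
    rw [hP i] at hy₀ ⊢
    rw [← isMinOn_iff, hcost_eq, isMinOn_entropicQuadratic_iff (hC i) hlam hy₀.1 hy₀pos]
    simp only [harg, eq_comm (a := s i)]
  simp only [hplayer, Classical.skolem, forall_and]

/-- Lemma 2: the entropy-regularized Nash equilibrium is
characterized by the smooth softmax-type equations. -/
theorem stmt7 (n m p : ℕ) (hm : 0 < m) (hp : 0 < p)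
    (E : Matrix (Fin (n + 1)) (Fin m) ℝ)
    (d : Fin p → Fin (n + 1)) (r : Fin p → Fin (n + 1) → ℝ)
    (b : Fin p → Fin m → ℝ)
    (C : Fin p → Fin p → Matrix (Fin m) (Fin m) ℝ)
    (Ered : Fin p → Matrix (Fin n) (Fin m) ℝ)
    (hEred : ∀ i, Ered i = E.submatrix (d i).succAbove id)
    (s : Fin p → Fin n → ℝ)
    (hs : ∀ i, s i = fun j => r i ((d i).succAbove j))
    (P : Fin p → Set (Fin m → ℝ))
    (hP : ∀ i, P i = {y | Ered i *ᵥ y = s i ∧ ∀ k, 0 ≤ y k})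
    (hPpos : ∀ i, ∃ y ∈ P i, ∀ k, 0 < y k)
    (hC : ∀ i, (C i i).PosSemidef)
    (lam : ℝ) (hlam : 0 < lam)
    (cost : Fin p → (Fin p → Fin m → ℝ) → (Fin m → ℝ) → ℝ)
    (hcost : ∀ i x y, cost i x y =
      (b i + (1 / 2 : ℝ) • (C i i *ᵥ y) +
        ∑ j ∈ Finset.univ.erase i, C i j *ᵥ x j) ⬝ᵥ y +
      lam * ∑ k, y k * Real.log (y k))
    (x : Fin p → Fin m → ℝ) :
    (∀ i, x i ∈ P i ∧ ∀ y ∈ P i, cost i x (x i) ≤ cost i x y) ↔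
      ∃ v : Fin p → Fin n → ℝ,
        (∀ i, s i = Ered i *ᵥ x i) ∧
        (∀ i k, x i k = Real.exp (lam⁻¹ *
          (((Ered i)ᵀ *ᵥ v i) k - b i k - (∑ j, C i j *ᵥ x j) k) - 1)) :=
  stmt7_general n m p b C Ered s P hP hPpos hC lam hlam cost hcost x
end

section
/- Suppose each Pᵢ contains a vector with all entries strictly positive, λ > 0, C + Cᵀ is positive semidefinite, and Cᵢᵢ = Cᵢᵢᵀ for all i ∈ [p]. Then there exists exactly one x = (x₁,…,x_p) ∈ ℝ^{pm} such that xᵢ ∈ argmin_{y ∈ Pᵢ} (bᵢ + ½Cᵢᵢy + Σ_{j≠i} Cᵢⱼxⱼ)ᵀy + λ·yᵀln(y) for all i ∈ [p], where yᵀln(y) = Σₖ yₖ ln(yₖ) with the convention 0·ln(0) = 0. -/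
open Real Finset Matrix

namespace Stmt9Aux

variable {ι : Type*} [Fintype ι]

noncomputable def ent (x : ι → ℝ) : ℝ := ∑ i, x i * Real.log (x i)

def dot (x y : ι → ℝ) : ℝ := ∑ i, x i * y i

def e2 (x : ι → ℝ) : ℝ := ∑ i, x i ^ 2


lemma continuous_ent : Continuous (ent (ι := ι)) := by
  refine continuous_finset_sum _ fun i _ => ?_
  exact Real.continuous_mul_log.comp (continuous_apply i)

lemma continuous_dot (y : ι → ℝ) : Continuous fun x => dot x y := by
  refine continuous_finset_sum _ fun i _ => ?_
  exact ((continuous_apply i).mul continuous_const)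

/-- convexity of entropy along segments in the nonneg orthant -/
lemma ent_segment {x y : ι → ℝ} (hx : ∀ i, 0 ≤ x i) (hy : ∀ i, 0 ≤ y i)
    {t : ℝ} (ht0 : 0 ≤ t) (ht1 : t ≤ 1) :
    ent ((1 - t) • x + t • y) ≤ (1 - t) * ent x + t * ent y := by
  have h : ∀ i, ((1 - t) • x + t • y) i * Real.log (((1 - t) • x + t • y) i)
      ≤ (1 - t) * (x i * Real.log (x i)) + t * (y i * Real.log (y i)) := by
    intro i
    have := Real.convexOn_mul_log.2 (Set.mem_Ici.2 (hx i)) (Set.mem_Ici.2 (hy i))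
      (by linarith : (0:ℝ) ≤ 1 - t) ht0 (by ring)
    simpa using this
  calc ent ((1 - t) • x + t • y) ≤ ∑ i, ((1 - t) * (x i * Real.log (x i)) + t * (y i * Real.log (y i))) :=
        Finset.sum_le_sum fun i _ => h i
    _ = (1 - t) * ent x + t * ent y := by
        rw [Finset.sum_add_distrib, ← Finset.mul_sum, ← Finset.mul_sum]; rfl

/-- the t-trick -/
lemma nonneg_of_forall_small {X q : ℝ} (hq : 0 ≤ q)
    (h : ∀ t : ℝ, 0 < t → t ≤ 1 → 0 ≤ t * X + t ^ 2 * q) : 0 ≤ X := by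
  by_contra hX
  push_neg at hX
  set t : ℝ := min 1 (-X / (2 * q + 1)) with ht
  have htpos : 0 < t := lt_min one_pos (div_pos (by linarith) (by linarith))
  have ht1 : t ≤ 1 := min_le_left _ _
  have h2 : t ≤ -X / (2 * q + 1) := min_le_right _ _
  have hq1 : (0:ℝ) < 2 * q + 1 := by linarith
  have h3 : t ^ 2 * q ≤ t * (-X) / 2 := by
    have : t * q ≤ -X / 2 := by
      calc t * q ≤ (-X / (2 * q + 1)) * q := by nlinarith
        _ ≤ -X / 2 := by
          rw [div_mul_eq_mul_div, div_le_div_iff₀ hq1 two_pos]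
          nlinarith
    calc t ^ 2 * q = t * (t * q) := by ring
      _ ≤ t * (-X / 2) := by nlinarith
      _ = t * (-X) / 2 := by ring
  have := h t htpos ht1
  nlinarith

/-- entropy pointwise lower bound -/
lemma mul_log_ge : ∀ s : ℝ, 0 ≤ s → -(Real.exp 1)⁻¹ ≤ s * Real.log s := by
  intro s hs
  rcases eq_or_lt_of_le hs with h | h
  · simp [← h]; positivity
  · have h1 : Real.log ((Real.exp 1 * s)⁻¹) ≤ (Real.exp 1 * s)⁻¹ - 1 :=
      Real.log_le_sub_one_of_pos (by positivity)
    rw [Real.log_inv, Real.log_mul (Real.exp_ne_zero 1) (ne_of_gt h), Real.log_exp] at h1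
    have h2 : -(1 + Real.log s) ≤ (Real.exp 1 * s)⁻¹ - 1 := by linarith
    have h3 : -Real.log s ≤ (Real.exp 1 * s)⁻¹ := by linarith
    have h4 : s * (-Real.log s) ≤ s * (Real.exp 1 * s)⁻¹ := by
      apply mul_le_mul_of_nonneg_left h3 hs
    have h5 : s * (Real.exp 1 * s)⁻¹ = (Real.exp 1)⁻¹ := by
      field_simp
    nlinarith

lemma ent_lower (x : ι → ℝ) (hx : ∀ i, 0 ≤ x i) :
    -(Fintype.card ι : ℝ) * (Real.exp 1)⁻¹ ≤ ent x := by
  calc -(Fintype.card ι : ℝ) * (Real.exp 1)⁻¹ = ∑ _i : ι, -(Real.exp 1)⁻¹ := by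
        simp [Finset.sum_const, Finset.card_univ, mul_comm]
    _ ≤ ent x := Finset.sum_le_sum fun i _ => mul_log_ge _ (hx i)


lemma e2_nonneg (x : ι → ℝ) : 0 ≤ e2 x := Finset.sum_nonneg fun i _ => sq_nonneg _

lemma continuous_e2 (z : ι → ℝ) : Continuous fun x : ι → ℝ => e2 (x - z) := by
  refine continuous_finset_sum _ fun i _ => ?_
  exact (((continuous_apply i).sub continuous_const).pow 2)

lemma e2_combo (u y z : ι → ℝ) (t : ℝ) :
    e2 ((1 - t) • u + t • y - z)
      = (1 - t) * e2 (u - z) + t * e2 (y - z) - t * (1 - t) * e2 (y - u) := by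
  unfold e2
  rw [Finset.mul_sum, Finset.mul_sum, Finset.mul_sum, ← Finset.sum_add_distrib,
    ← Finset.sum_sub_distrib]
  refine Finset.sum_congr rfl fun i _ => ?_
  simp only [Pi.add_apply, Pi.smul_apply, Pi.sub_apply, smul_eq_mul]
  ring


lemma firm_identity (u v z z' : ι → ℝ) :
    e2 (v - z) - e2 (u - z) + e2 (u - z') - e2 (v - z') = 2 * dot (v - u) (z' - z) := by
  unfold e2 dot
  rw [Finset.mul_sum, ← Finset.sum_sub_distrib, ← Finset.sum_add_distrib, ← Finset.sum_sub_distrib]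
  refine Finset.sum_congr rfl fun i _ => ?_
  simp only [Pi.sub_apply]
  ring

lemma e2_add_smul (a u : ι → ℝ) (γ : ℝ) :
    e2 (a + γ • u) = e2 a + 2 * γ * dot u a + γ ^ 2 * e2 u := by
  unfold e2 dot
  rw [Finset.mul_sum, Finset.mul_sum, ← Finset.sum_add_distrib, ← Finset.sum_add_distrib]
  refine Finset.sum_congr rfl fun i _ => ?_
  simp only [Pi.add_apply, Pi.smul_apply, smul_eq_mul]
  ring

lemma e2_add_le (a c : ι → ℝ) : e2 (a + c) ≤ 2 * e2 a + 2 * e2 c := by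
  unfold e2
  rw [Finset.mul_sum, Finset.mul_sum, ← Finset.sum_add_distrib]
  refine Finset.sum_le_sum fun i _ => ?_
  simp only [Pi.add_apply]
  nlinarith [sq_nonneg (a i - c i)]

lemma e2_mulVec_le (L : Matrix ι ι ℝ) (w : ι → ℝ) :
    e2 (L *ᵥ w) ≤ (∑ i, ∑ j, L i j ^ 2) * e2 w := by
  unfold e2
  rw [Finset.sum_mul]
  refine Finset.sum_le_sum fun i _ => ?_
  have h : (L *ᵥ w) i = ∑ j, L i j * w j := by
    simp [Matrix.mulVec, dotProduct]
  rw [h]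
  exact Finset.sum_mul_sq_le_sq_mul_sq Finset.univ _ _

lemma dot_cs (a c : ι → ℝ) : (dot a c) ^ 2 ≤ e2 a * e2 c :=
  Finset.sum_mul_sq_le_sq_mul_sq Finset.univ _ _

lemma e2_le_of_firm {a c : ι → ℝ} (h : e2 a ≤ dot a c) : e2 a ≤ e2 c := by
  have cs := dot_cs a c
  have h1 := e2_nonneg a
  have h2 := e2_nonneg c
  nlinarith

lemma dist_le_sqrt_e2 (a b : ι → ℝ) : dist a b ≤ Real.sqrt (e2 (a - b)) := by
  rw [dist_pi_le_iff (Real.sqrt_nonneg _)]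
  intro i
  rw [Real.dist_eq]
  calc |a i - b i| = Real.sqrt ((a i - b i) ^ 2) := (Real.sqrt_sq_eq_abs _).symm
    _ ≤ _ := by
        apply Real.sqrt_le_sqrt
        unfold e2
        exact Finset.single_le_sum (f := fun j => ((a - b) j) ^ 2)
          (fun j _ => sq_nonneg _) (Finset.mem_univ i)

lemma e2_le_card_dist (a b : ι → ℝ) :
    e2 (a - b) ≤ (Fintype.card ι : ℝ) * dist a b ^ 2 := by
  unfold e2
  calc ∑ i, ((a - b) i) ^ 2 ≤ ∑ _i : ι, dist a b ^ 2 := by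
        refine Finset.sum_le_sum fun i _ => ?_
        have h1 : |a i - b i| ≤ dist a b := by
          rw [← Real.dist_eq]; exact dist_le_pi_dist a b i
        have := abs_nonneg (a i - b i)
        calc ((a - b) i) ^ 2 = |a i - b i| ^ 2 := by
              simp only [Pi.sub_apply, sq_abs]
          _ ≤ dist a b ^ 2 := by nlinarith
    _ = (Fintype.card ι : ℝ) * dist a b ^ 2 := by
        simp [Finset.sum_const, Finset.card_univ, mul_comm]

lemma continuous_dot₂ {f g : (ι → ℝ) → ι → ℝ} (hf : Continuous f) (hg : Continuous g) :
    Continuous fun x => dot (f x) (g x) := by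
  refine continuous_finset_sum _ fun i _ => ?_
  exact ((continuous_apply i).comp hf).mul ((continuous_apply i).comp hg)


lemma continuous_mulVec {κ : Type*} [Fintype κ] (L : Matrix κ ι ℝ) :
    Continuous fun x : ι → ℝ => L *ᵥ x := by
  refine continuous_pi fun i => ?_
  have h : (fun x : ι → ℝ => (L *ᵥ x) i) = fun x => ∑ j, L i j * x j := by
    funext x; simp [Matrix.mulVec, dotProduct]
  rw [h]
  exact continuous_finset_sum _ fun j _ => continuous_const.mul (continuous_apply j)


variable {K : Set (ι → ℝ)}

lemma exists_prox (hKc : IsClosed K) (hKpos : ∀ x ∈ K, ∀ i, 0 ≤ x i)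
    {y₀ : ι → ℝ} (hy₀ : y₀ ∈ K) {lam α : ℝ} (hlam : 0 < lam) (hα : 0 < α) (z : ι → ℝ) :
    ∃ u ∈ K, ∀ y ∈ K,
      lam * ent u + α / 2 * e2 (u - z) ≤ lam * ent y + α / 2 * e2 (y - z) := by
  set f : (ι → ℝ) → ℝ := fun y => lam * ent y + α / 2 * e2 (y - z) with hf
  have hfc : Continuous f := by
    exact (continuous_const.mul continuous_ent).add (continuous_const.mul (continuous_e2 z))
  set S : Set (ι → ℝ) := K ∩ {y | f y ≤ f y₀} with hS
  have hSc : IsClosed S := hKc.inter (isClosed_le hfc continuous_const)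
  set B : ℝ := lam * ent y₀ + α / 2 * e2 (y₀ - z)
    + lam * ((Fintype.card ι : ℝ) * (Real.exp 1)⁻¹) with hB
  have hBnn : ∀ y ∈ S, e2 (y - z) ≤ 2 * B / α := by
    intro y hy
    have h1 : -(Fintype.card ι : ℝ) * (Real.exp 1)⁻¹ ≤ ent y := ent_lower y (hKpos y hy.1)
    have h2 : f y ≤ f y₀ := hy.2
    simp only [hf] at h2
    rw [le_div_iff₀ hα, hB]
    nlinarith [mul_le_mul_of_nonneg_left h1 hlam.le]
  have hBnonneg : 0 ≤ 2 * B / α := le_trans (e2_nonneg (y₀ - z)) (hBnn y₀ ⟨hy₀, Set.mem_setOf.2 le_rfl⟩)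
  set r : ℝ := Real.sqrt (2 * B / α) with hr
  have hSball : S ⊆ Metric.closedBall z r := by
    intro y hy
    rw [Metric.mem_closedBall, dist_pi_le_iff (Real.sqrt_nonneg _)]
    intro i
    rw [Real.dist_eq]
    have h1 : (y i - z i) ^ 2 ≤ 2 * B / α := by
      refine le_trans ?_ (hBnn y hy)
      unfold e2
      exact Finset.single_le_sum (f := fun j => (y j - z j) ^ 2) (fun j _ => sq_nonneg _) (Finset.mem_univ i)
    calc |y i - z i| = Real.sqrt ((y i - z i) ^ 2) := (Real.sqrt_sq_eq_abs _).symm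
      _ ≤ r := Real.sqrt_le_sqrt h1
  have hScompact : IsCompact S :=
    (isCompact_closedBall z r).of_isClosed_subset hSc hSball
  obtain ⟨u, huS, hmin⟩ := hScompact.exists_isMinOn ⟨y₀, hy₀, Set.mem_setOf.2 le_rfl⟩ hfc.continuousOn
  refine ⟨u, huS.1, fun y hy => ?_⟩
  by_cases hyS : f y ≤ f y₀
  · exact hmin ⟨hy, hyS⟩
  · push_neg at hyS
    exact le_trans (hmin ⟨hy₀, Set.mem_setOf.2 le_rfl⟩) hyS.le

lemma prox_char (hKconv : Convex ℝ K) (hKpos : ∀ x ∈ K, ∀ i, 0 ≤ x i)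
    {lam α : ℝ} (hlam : 0 < lam) (hα : 0 < α) {z u : ι → ℝ} (hu : u ∈ K)
    (hmin : ∀ y ∈ K,
      lam * ent u + α / 2 * e2 (u - z) ≤ lam * ent y + α / 2 * e2 (y - z))
    {y : ι → ℝ} (hy : y ∈ K) :
    lam * ent u + α / 2 * e2 (u - z) + α / 2 * e2 (y - u)
      ≤ lam * ent y + α / 2 * e2 (y - z) := by
  set X : ℝ := lam * (ent y - ent u) + α / 2 * e2 (y - z) - α / 2 * e2 (u - z)
    - α / 2 * e2 (y - u) with hX
  have : 0 ≤ X := by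
    refine nonneg_of_forall_small (q := α / 2 * e2 (y - u)) (mul_nonneg (by positivity) (e2_nonneg _)) ?_
    intro t ht0 ht1
    have hmem : (1 - t) • u + t • y ∈ K :=
      hKconv hu hy (by linarith) ht0.le (by ring)
    have h1 := hmin _ hmem
    have h2 := ent_segment (hKpos u hu) (hKpos y hy) ht0.le ht1
    have h3 := e2_combo u y z t
    nlinarith
  simp only [hX] at this
  linarith


lemma e2_smul (γ : ℝ) (u : ι → ℝ) : e2 (γ • u) = γ ^ 2 * e2 u := by
  unfold e2; rw [Finset.mul_sum]
  exact Finset.sum_congr rfl fun i _ => by simp [mul_pow]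

lemma e2_sub_comm (a b : ι → ℝ) : e2 (a - b) = e2 (b - a) := by
  unfold e2
  exact Finset.sum_congr rfl fun i _ => by simp only [Pi.sub_apply]; ring

lemma dot_add_left (a b w : ι → ℝ) : dot (a + b) w = dot a w + dot b w := by
  unfold dot; rw [← Finset.sum_add_distrib]
  exact Finset.sum_congr rfl fun i _ => by simp only [Pi.add_apply]; ring

lemma dot_smul_left (γ : ℝ) (a w : ι → ℝ) : dot (γ • a) w = γ * dot a w := by
  unfold dot; rw [Finset.mul_sum]
  exact Finset.sum_congr rfl fun i _ => by simp only [Pi.smul_apply, smul_eq_mul]; ring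

lemma dot_self_eq_e2 (w : ι → ℝ) : dot w w = e2 w := by
  unfold dot e2; exact Finset.sum_congr rfl fun i _ => (sq (w i)).symm

set_option maxHeartbeats 1000000 in
theorem exists_VIeps {K : Set (ι → ℝ)} (hKc : IsClosed K) (hKconv : Convex ℝ K)
    (hKpos : ∀ x ∈ K, ∀ i, 0 ≤ x i) {y₀ : ι → ℝ} (hy₀ : y₀ ∈ K)
    {lam : ℝ} (hlam : 0 < lam) (b : ι → ℝ) (L : Matrix ι ι ℝ)
    (hL : ∀ w, 0 ≤ dot (L *ᵥ w) w) {ε : ℝ} (hε : 0 < ε) :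
    ∃ x ∈ K, ∀ y ∈ K,
      0 ≤ lam * (ent y - ent x) + dot (b + L *ᵥ x + ε • x) (y - x) := by
  classical
  set ML : ℝ := ∑ i, ∑ j, L i j ^ 2 with hML
  have hMLnn : 0 ≤ ML := Finset.sum_nonneg fun i _ => Finset.sum_nonneg fun j _ => sq_nonneg _
  set S : ℝ := 2 * ML + 2 * ε ^ 2 with hS
  have hSpos : 0 < S := by positivity
  set γ : ℝ := ε / S with hγdef
  have hγ : 0 < γ := div_pos hε hSpos
  have hα : (0:ℝ) < 1 / γ := by positivity
  choose Q hQK hQmin using fun z : ι → ℝ =>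
    exists_prox hKc hKpos hy₀ hlam hα z
  set F : (ι → ℝ) → ι → ℝ := fun x => b + L *ᵥ x + ε • x with hF
  set T : (ι → ℝ) → ι → ℝ := fun x => Q (x - γ • F x) with hT
  -- contraction estimate
  set κ2 : ℝ := 1 - ε ^ 2 / S with hκ2def
  have hκ2nn : 0 ≤ κ2 := by
    rw [hκ2def, sub_nonneg, div_le_one hSpos]
    nlinarith
  have hκ2lt : κ2 < 1 := by
    rw [hκ2def]
    have : 0 < ε ^ 2 / S := by positivity
    linarith
  have hcontr : ∀ x x', e2 (T x - T x') ≤ κ2 * e2 (x - x') := by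
    intro x x'
    set z : ι → ℝ := x - γ • F x with hz
    set z' : ι → ℝ := x' - γ • F x' with hz'
    set u : ι → ℝ := Q z with hu
    set v : ι → ℝ := Q z' with hv
    -- firm nonexpansiveness
    have h1 := prox_char hKconv hKpos hlam hα (hQK z) (hQmin z) (hQK z')
    have h2 := prox_char hKconv hKpos hlam hα (hQK z') (hQmin z') (hQK z)
    have hfirm : e2 (v - u) ≤ dot (v - u) (z' - z) := by
      have hid := firm_identity u v z z'
      have hee := e2_sub_comm u v
      have h₀ : (0:ℝ) < 1 / γ / 2 := by positivity
      nlinarith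
    have hnonexp : e2 (v - u) ≤ e2 (z' - z) := e2_le_of_firm hfirm
    -- linear estimate
    set w : ι → ℝ := x' - x with hw
    have hzz : z' - z = w - γ • (L *ᵥ w + ε • w) := by
      funext i
      simp only [hz, hz', hw, hF, Pi.sub_apply, Pi.smul_apply, Pi.add_apply,
        smul_eq_mul, Matrix.mulVec_sub]
      ring
    have hlin : e2 (z' - z) ≤ κ2 * e2 w := by
      rw [hzz]
      have hexp : e2 (w - γ • (L *ᵥ w + ε • w))
          = e2 w - 2 * γ * dot (L *ᵥ w + ε • w) w + γ ^ 2 * e2 (L *ᵥ w + ε • w) := by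
        have := e2_add_smul w (L *ᵥ w + ε • w) (-γ)
        have hrw : w + (-γ) • (L *ᵥ w + ε • w) = w - γ • (L *ᵥ w + ε • w) := by
          funext i; simp; ring
        rw [hrw] at this
        rw [this]; ring
      have hdot : ε * e2 w ≤ dot (L *ᵥ w + ε • w) w := by
        rw [dot_add_left, dot_smul_left, dot_self_eq_e2]
        have := hL w
        linarith
      have he2u : e2 (L *ᵥ w + ε • w) ≤ S * e2 w := by
        calc e2 (L *ᵥ w + ε • w) ≤ 2 * e2 (L *ᵥ w) + 2 * e2 (ε • w) := e2_add_le _ _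
          _ ≤ 2 * (ML * e2 w) + 2 * (ε ^ 2 * e2 w) := by
              have h3 := e2_mulVec_le L w
              have h4 := e2_smul ε w
              rw [h4]
              linarith
          _ = S * e2 w := by rw [hS]; ring
      rw [hexp]
      have hcoef : 1 - 2 * γ * ε + γ ^ 2 * S = κ2 := by
        rw [hκ2def, hγdef]
        field_simp
        ring
      calc e2 w - 2 * γ * dot (L *ᵥ w + ε • w) w + γ ^ 2 * e2 (L *ᵥ w + ε • w)
          ≤ e2 w - 2 * γ * (ε * e2 w) + γ ^ 2 * (S * e2 w) := by
            have h5 := mul_le_mul_of_nonneg_left hdot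
              (le_of_lt (by positivity : (0:ℝ) < 2 * γ))
            have h6 := mul_le_mul_of_nonneg_left he2u (sq_nonneg γ)
            linarith
        _ = κ2 * e2 w := by rw [← hcoef]; ring
    have hTvu : e2 (T x - T x') = e2 (v - u) := by
      have : e2 (T x - T x') = e2 (u - v) := rfl
      rw [this, e2_sub_comm]
    calc e2 (T x - T x') = e2 (v - u) := hTvu
      _ ≤ e2 (z' - z) := hnonexp
      _ ≤ κ2 * e2 w := hlin
      _ = κ2 * e2 (x - x') := by rw [hw, e2_sub_comm]
  -- iterate contraction
  have hiter : ∀ (k : ℕ) x x', e2 (T^[k] x - T^[k] x') ≤ κ2 ^ k * e2 (x - x') := by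
    intro k
    induction k with
    | zero => intro x x'; simp
    | succ k ih =>
      intro x x'
      rw [Function.iterate_succ_apply', Function.iterate_succ_apply']
      calc e2 (T (T^[k] x) - T (T^[k] x')) ≤ κ2 * e2 (T^[k] x - T^[k] x') := hcontr _ _
        _ ≤ κ2 * (κ2 ^ k * e2 (x - x')) := mul_le_mul_of_nonneg_left (ih x x') hκ2nn
        _ = κ2 ^ (k + 1) * e2 (x - x') := by ring
  set N : ℝ := (Fintype.card ι : ℝ) with hN
  have hNnn : 0 ≤ N := Nat.cast_nonneg _
  obtain ⟨k, hk⟩ : ∃ k : ℕ, κ2 ^ k < 1 / (N + 1) :=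
    exists_pow_lt_of_lt_one (by positivity) hκ2lt
  have hkN : κ2 ^ k * N < 1 := by
    have h1 : κ2 ^ k * N ≤ (1 / (N + 1)) * N := by
      apply mul_le_mul_of_nonneg_right hk.le hNnn
    have h2 : (1 / (N + 1)) * N < 1 := by
      rw [div_mul_eq_mul_div, div_lt_one (by linarith)]
      linarith
    linarith
  set c : ℝ := Real.sqrt (κ2 ^ k * N) with hc
  have hc0 : 0 ≤ c := Real.sqrt_nonneg _
  have hc1 : c < 1 := by
    nlinarith [Real.sq_sqrt (by positivity : (0:ℝ) ≤ κ2 ^ k * N)]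
  have hlips : ∀ x x', dist (T^[k] x) (T^[k] x') ≤ c * dist x x' := by
    intro x x'
    calc dist (T^[k] x) (T^[k] x') ≤ Real.sqrt (e2 (T^[k] x - T^[k] x')) := dist_le_sqrt_e2 _ _
      _ ≤ Real.sqrt (κ2 ^ k * (N * dist x x' ^ 2)) := by
          apply Real.sqrt_le_sqrt
          calc e2 (T^[k] x - T^[k] x') ≤ κ2 ^ k * e2 (x - x') := hiter k x x'
            _ ≤ κ2 ^ k * (N * dist x x' ^ 2) :=
                mul_le_mul_of_nonneg_left (e2_le_card_dist x x') (pow_nonneg hκ2nn k)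
      _ = c * dist x x' := by
          rw [hc, ← Real.sqrt_sq dist_nonneg, ← Real.sqrt_mul (by positivity)]
          congr 1
          rw [Real.sqrt_sq dist_nonneg]
          ring
  have hcontracting : ContractingWith c.toNNReal (T^[k]) := by
    constructor
    · have h1 : (c.toNNReal : ℝ) < 1 := by rw [Real.coe_toNNReal _ hc0]; exact hc1
      exact_mod_cast h1
    · apply LipschitzWith.of_dist_le_mul
      intro x x'
      rw [Real.coe_toNNReal _ hc0]
      exact hlips x x'
  have hfix : Function.IsFixedPt (T^[k]) (ContractingWith.fixedPoint (T^[k]) hcontracting) :=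
    hcontracting.fixedPoint_isFixedPt
  set x₀ : ι → ℝ := ContractingWith.fixedPoint (T^[k]) hcontracting with hx₀
  have hTfix : Function.IsFixedPt (T^[k]) (T x₀) := by
    unfold Function.IsFixedPt
    rw [← Function.iterate_succ_apply, Function.iterate_succ_apply', hfix]
  have hTx : T x₀ = x₀ := hcontracting.fixedPoint_unique' hTfix hfix
  -- x₀ is the desired point
  have hx₀K : x₀ ∈ K := by rw [← hTx]; exact hQK _
  clear_value x₀
  refine ⟨x₀, hx₀K, fun y hy => ?_⟩
  set z : ι → ℝ := x₀ - γ • F x₀ with hz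
  have hQz : Q z = x₀ := hTx
  have hchar := prox_char hKconv hKpos hlam hα (hQK z) (hQmin z) hy
  rw [hQz] at hchar
  have he1 : e2 (x₀ - z) = γ ^ 2 * e2 (F x₀) := by
    rw [hz]
    have : x₀ - (x₀ - γ • F x₀) = γ • F x₀ := by funext i; simp
    rw [this, e2_smul]
  have he2 : e2 (y - z) = e2 (y - x₀) + 2 * γ * dot (F x₀) (y - x₀) + γ ^ 2 * e2 (F x₀) := by
    have hrw : y - z = (y - x₀) + γ • F x₀ := by funext i; simp [hz]; ring
    rw [hrw, e2_add_smul]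
  have hαγ : 1 / γ / 2 * (2 * γ) = 1 := by
    field_simp
  rw [he1, he2] at hchar
  have hexp : 1 / γ / 2 * (e2 (y - x₀) + 2 * γ * dot (F x₀) (y - x₀) + γ ^ 2 * e2 (F x₀))
      = 1 / γ / 2 * e2 (y - x₀) + dot (F x₀) (y - x₀) + 1 / γ / 2 * (γ ^ 2 * e2 (F x₀)) := by
    have hγne : γ ≠ 0 := ne_of_gt hγ
    field_simp
  rw [hexp] at hchar
  have : lam * ent x₀ ≤ lam * ent y + dot (F x₀) (y - x₀) := by linarith
  have hgoal : 0 ≤ lam * (ent y - ent x₀) + dot (F x₀) (y - x₀) := by linarith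
  exact hgoal


lemma dot_le_sqrt (a c : ι → ℝ) : dot a c ≤ Real.sqrt (e2 a) * Real.sqrt (e2 c) := by
  have h1 := Real.sqrt_le_sqrt (dot_cs a c)
  rw [Real.sqrt_sq_eq_abs, Real.sqrt_mul (e2_nonneg a)] at h1
  exact le_trans (le_abs_self _) h1

lemma sqrt_e2_le_sum {x : ι → ℝ} (hx : ∀ i, 0 ≤ x i) :
    Real.sqrt (e2 x) ≤ ∑ i, x i := by
  have h1 : e2 x ≤ (∑ i, x i) ^ 2 := by
    unfold e2
    rw [sq, Finset.sum_mul_sum]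
    calc ∑ i, x i ^ 2 ≤ ∑ i, ∑ j, x i * x j := by
          refine Finset.sum_le_sum fun i _ => ?_
          rw [sq]
          calc x i * x i ≤ x i * ∑ j, x j := by
                refine mul_le_mul_of_nonneg_left ?_ (hx i)
                exact Finset.single_le_sum (fun j _ => hx j) (Finset.mem_univ i)
            _ = ∑ j, x i * x j := Finset.mul_sum _ _ _
      _ = _ := rfl
  calc Real.sqrt (e2 x) ≤ Real.sqrt ((∑ i, x i) ^ 2) := Real.sqrt_le_sqrt h1
    _ = |∑ i, x i| := Real.sqrt_sq_eq_abs _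
    _ = ∑ i, x i := abs_of_nonneg (Finset.sum_nonneg fun i _ => hx i)

lemma ent_superlinear {x : ι → ℝ} (hx : ∀ i, 0 ≤ x i) {M : ℝ} (hM : 1 ≤ M) :
    Real.log M * Real.sqrt (e2 x)
      - (Fintype.card ι : ℝ) * (M * Real.log M + (Real.exp 1)⁻¹) ≤ ent x := by
  have hlogM : 0 ≤ Real.log M := Real.log_nonneg hM
  have hcoord : ∀ s : ℝ, 0 ≤ s →
      s * Real.log M - (M * Real.log M + (Real.exp 1)⁻¹) ≤ s * Real.log s := by
    intro s hs
    rcases le_or_gt M s with h | h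
    · have h1 : s * Real.log M ≤ s * Real.log s := by
        apply mul_le_mul_of_nonneg_left _ hs
        exact Real.log_le_log (by linarith) h
      have h2 : 0 ≤ M * Real.log M + (Real.exp 1)⁻¹ := by positivity
      linarith
    · have h1 : -(Real.exp 1)⁻¹ ≤ s * Real.log s := mul_log_ge s hs
      have h2 : s * Real.log M ≤ M * Real.log M :=
        mul_le_mul_of_nonneg_right h.le hlogM
      linarith
  calc Real.log M * Real.sqrt (e2 x)
        - (Fintype.card ι : ℝ) * (M * Real.log M + (Real.exp 1)⁻¹)
      ≤ Real.log M * (∑ i, x i)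
        - (Fintype.card ι : ℝ) * (M * Real.log M + (Real.exp 1)⁻¹) := by
        have := mul_le_mul_of_nonneg_left (sqrt_e2_le_sum hx) hlogM
        linarith
    _ ≤ ent x := by
        unfold ent
        have h3 : Real.log M * (∑ i, x i)
            - (Fintype.card ι : ℝ) * (M * Real.log M + (Real.exp 1)⁻¹)
            = ∑ i, (x i * Real.log M - (M * Real.log M + (Real.exp 1)⁻¹)) := by
          rw [Finset.sum_sub_distrib, ← Finset.sum_mul, Finset.sum_const, Finset.card_univ,
            nsmul_eq_mul]
          ring
        rw [h3]
        exact Finset.sum_le_sum fun i _ => hcoord (x i) (hx i)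

theorem exists_VI {K : Set (ι → ℝ)} (hKc : IsClosed K) (hKconv : Convex ℝ K)
    (hKpos : ∀ x ∈ K, ∀ i, 0 ≤ x i) {y₀ : ι → ℝ} (hy₀ : y₀ ∈ K)
    {lam : ℝ} (hlam : 0 < lam) (b : ι → ℝ) (L : Matrix ι ι ℝ)
    (hL : ∀ w, 0 ≤ dot (L *ᵥ w) w) :
    ∃ x ∈ K, ∀ y ∈ K,
      0 ≤ lam * (ent y - ent x) + dot (b + L *ᵥ x) (y - x) := by
  classical
  set ε : ℕ → ℝ := fun n => 1 / (n + 1) with hε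
  have hεpos : ∀ n, 0 < ε n := fun n => by positivity
  have hεle1 : ∀ n, ε n ≤ 1 := fun n => by
    rw [hε]
    rw [div_le_one (by positivity)]
    push_cast
    linarith [Nat.cast_nonneg (α := ℝ) n]
  choose xs hxsK hxsVI using fun n : ℕ =>
    exists_VIeps hKc hKconv hKpos hy₀ hlam b L hL (hεpos n)
  -- uniform bound
  set ML : ℝ := ∑ i, ∑ j, L i j ^ 2 with hML
  have hMLnn : 0 ≤ ML := Finset.sum_nonneg fun i _ => Finset.sum_nonneg fun j _ => sq_nonneg _
  set sy : ℝ := Real.sqrt (e2 y₀) with hsy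
  have hsynn : 0 ≤ sy := Real.sqrt_nonneg _
  set c₁ : ℝ := Real.sqrt (e2 (-b)) + Real.sqrt ML * sy + sy with hc₁
  have hc₁nn : 0 ≤ c₁ := by positivity
  set c₀ : ℝ := lam * ent y₀ + dot b y₀ with hc₀
  set M : ℝ := Real.exp ((c₁ + 1) / lam) with hMdef
  have hM1 : 1 ≤ M := Real.one_le_exp (by positivity)
  have hlogM : Real.log M = (c₁ + 1) / lam := Real.log_exp _
  set R : ℝ := c₀ + lam * ((Fintype.card ι : ℝ)
    * (M * Real.log M + (Real.exp 1)⁻¹)) with hR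
  have dot_add_left : ∀ a b' w : ι → ℝ, dot (a + b') w = dot a w + dot b' w := by
    intro a b' w
    unfold dot
    rw [← Finset.sum_add_distrib]
    exact Finset.sum_congr rfl fun i _ => by simp only [Pi.add_apply]; ring
  have dot_smul_left : ∀ (γ : ℝ) (a w : ι → ℝ), dot (γ • a) w = γ * dot a w := by
    intro γ a w
    unfold dot
    rw [Finset.mul_sum]
    exact Finset.sum_congr rfl fun i _ => by simp only [Pi.smul_apply, smul_eq_mul]; ring
  have dot_sub_right : ∀ a y z : ι → ℝ, dot a (y - z) = dot a y - dot a z := by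
    intro a y z
    unfold dot
    rw [← Finset.sum_sub_distrib]
    exact Finset.sum_congr rfl fun i _ => by simp only [Pi.sub_apply]; ring
  have dot_self_e2 : ∀ w : ι → ℝ, dot w w = e2 w := by
    intro w
    unfold dot e2
    exact Finset.sum_congr rfl fun i _ => (sq (w i)).symm
  have hbound : ∀ n, Real.sqrt (e2 (xs n)) ≤ R := by
    intro n
    set x := xs n with hx
    set u : ℝ := Real.sqrt (e2 x) with hu
    have hunn : 0 ≤ u := Real.sqrt_nonneg _
    have hVI := hxsVI n y₀ hy₀
    have hdotexp : dot (b + L *ᵥ x + ε n • x) (y₀ - x)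
        = (dot b y₀ - dot b x) + (dot (L *ᵥ x) y₀ - dot (L *ᵥ x) x)
          + ε n * (dot x y₀ - e2 x) := by
      rw [dot_add_left, dot_add_left, dot_smul_left, dot_sub_right, dot_sub_right,
        dot_sub_right, dot_self_e2]
    have h1 : dot (L *ᵥ x) y₀ ≤ Real.sqrt ML * sy * u := by
      have h1' : dot (L *ᵥ x) y₀ ≤ Real.sqrt (e2 (L *ᵥ x)) * Real.sqrt (e2 y₀) :=
        dot_le_sqrt _ _
      have h1'' : Real.sqrt (e2 (L *ᵥ x)) ≤ Real.sqrt ML * u := by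
        rw [hu, ← Real.sqrt_mul hMLnn]
        exact Real.sqrt_le_sqrt (e2_mulVec_le L x)
      calc dot (L *ᵥ x) y₀ ≤ Real.sqrt (e2 (L *ᵥ x)) * Real.sqrt (e2 y₀) := h1'
        _ ≤ (Real.sqrt ML * u) * sy := by
            rw [hsy]
            exact mul_le_mul_of_nonneg_right h1'' (Real.sqrt_nonneg _)
        _ = Real.sqrt ML * sy * u := by ring
    have h2 : -dot b x ≤ Real.sqrt (e2 (-b)) * u := by
      have hneg : -dot b x = dot (-b) x := by
        unfold dot
        rw [← Finset.sum_neg_distrib]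
        exact Finset.sum_congr rfl fun i _ => by simp
      rw [hneg, hu]
      exact dot_le_sqrt _ _
    have hd : dot x y₀ ≤ u * sy := by rw [hu, hsy]; exact dot_le_sqrt _ _
    have h3 : ε n * (dot x y₀ - e2 x) ≤ sy * u := by
      have he2x : 0 ≤ e2 x := e2_nonneg x
      have hsu : (0:ℝ) ≤ sy * u := by positivity
      rcases le_or_gt (dot x y₀ - e2 x) 0 with h | h
      · nlinarith [(hεpos n).le]
      · have h5 : ε n * (dot x y₀ - e2 x) ≤ dot x y₀ - e2 x := by
          nlinarith [hεle1 n, hεpos n]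
        nlinarith
    have h4 : 0 ≤ dot (L *ᵥ x) x := hL x
    have hmain : lam * ent x ≤ c₀ + c₁ * u := by
      rw [hdotexp] at hVI
      have hc1u : c₁ * u = Real.sqrt (e2 (-b)) * u + Real.sqrt ML * sy * u + sy * u := by
        rw [hc₁]; ring
      rw [hc₀]
      linarith
    have hlower := ent_superlinear (hKpos x (hxsK n)) hM1
    rw [← hu] at hlower
    have hlm : lam * Real.log M = c₁ + 1 := by
      rw [hlogM]; field_simp
    have hll := mul_le_mul_of_nonneg_left hlower hlam.le
    have hexpand : lam * (Real.log M * u - (Fintype.card ι : ℝ)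
        * (M * Real.log M + (Real.exp 1)⁻¹))
        = (lam * Real.log M) * u - lam * ((Fintype.card ι : ℝ)
        * (M * Real.log M + (Real.exp 1)⁻¹)) := by ring
    rw [hexpand, hlm] at hll
    have hsplit : (c₁ + 1) * u = c₁ * u + u := by ring
    rw [hsplit] at hll
    rw [hR]
    linarith
  -- compactness
  set R' : ℝ := max R 0 with hR'
  have hmem : ∀ n, xs n ∈ Metric.closedBall (0 : ι → ℝ) R' := by
    intro n
    rw [Metric.mem_closedBall]
    calc dist (xs n) 0 ≤ Real.sqrt (e2 (xs n - 0)) := dist_le_sqrt_e2 _ _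
      _ = Real.sqrt (e2 (xs n)) := by rw [sub_zero]
      _ ≤ R := hbound n
      _ ≤ R' := le_max_left _ _
  obtain ⟨xstar, _, φ, hφmono, hφtend⟩ :=
    (isCompact_closedBall (0 : ι → ℝ) R').tendsto_subseq hmem
  have hxstarK : xstar ∈ K :=
    hKc.mem_of_tendsto hφtend (Filter.Eventually.of_forall fun n => hxsK (φ n))
  refine ⟨xstar, hxstarK, fun y hy => ?_⟩
  set G : ℝ × (ι → ℝ) → ℝ := fun q =>
    lam * (ent y - ent q.2) + dot (b + L *ᵥ q.2 + q.1 • q.2) (y - q.2) with hG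
  have hGc : Continuous G := by
    apply Continuous.add
    · exact continuous_const.mul (continuous_const.sub (continuous_ent.comp continuous_snd))
    · have hf : Continuous fun q : ℝ × (ι → ℝ) => b + L *ᵥ q.2 + q.1 • q.2 := by
        refine continuous_pi fun i => ?_
        simp only [Pi.add_apply, Pi.smul_apply, smul_eq_mul]
        apply Continuous.add
        · apply Continuous.add continuous_const
          have : (fun q : ℝ × (ι → ℝ) => (L *ᵥ q.2) i)
              = fun q => ∑ j, L i j * q.2 j := by
            funext q; simp [Matrix.mulVec, dotProduct]
          rw [this]
          exact continuous_finset_sum _ fun j _ =>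
            continuous_const.mul ((continuous_apply j).comp continuous_snd)
        · exact continuous_fst.mul ((continuous_apply i).comp continuous_snd)
      have hg : Continuous fun q : ℝ × (ι → ℝ) => y - q.2 :=
        continuous_const.sub continuous_snd
      unfold dot
      exact continuous_finset_sum _ fun i _ =>
        ((continuous_apply i).comp hf).mul ((continuous_apply i).comp hg)
  have hεtend : Filter.Tendsto (fun n => ε (φ n)) Filter.atTop (nhds 0) := by
    have h1 : Filter.Tendsto ε Filter.atTop (nhds 0) := by
      rw [hε]
      exact tendsto_one_div_add_atTop_nhds_zero_nat
    exact h1.comp hφmono.tendsto_atTop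
  have hpair : Filter.Tendsto (fun n => (ε (φ n), xs (φ n))) Filter.atTop
      (nhds (0, xstar)) := hεtend.prodMk_nhds hφtend
  have hseq : Filter.Tendsto (fun n => G (ε (φ n), xs (φ n))) Filter.atTop
      (nhds (G (0, xstar))) := (hGc.tendsto _).comp hpair
  have hge : 0 ≤ G (0, xstar) :=
    ge_of_tendsto' hseq (fun n => hxsVI (φ n) y hy)
  have hzero : G (0, xstar)
      = lam * (ent y - ent xstar) + dot (b + L *ᵥ xstar) (y - xstar) := by
    rw [hG]
    simp only [zero_smul, add_zero]
  rw [hzero] at hge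
  exact hge


section helpers

lemma seg_mem {K : Set (ι → ℝ)} (hK : Convex ℝ K) {x y : ι → ℝ}
    (hx : x ∈ K) (hy : y ∈ K) {t : ℝ} (h0 : 0 ≤ t) (h1 : t ≤ 1) :
    x + t • (y - x) ∈ K := by
  have h := hK hx hy (by linarith : (0:ℝ) ≤ 1 - t) h0 (by ring)
  have heq : x + t • (y - x) = (1 - t) • x + t • y := by
    funext i
    simp only [Pi.add_apply, Pi.smul_apply, Pi.sub_apply, smul_eq_mul]
    ring
  rw [heq]
  exact h

lemma dot_smul_right (γ : ℝ) (a w : ι → ℝ) : dot a (γ • w) = γ * dot a w := by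
  unfold dot
  rw [Finset.mul_sum]
  exact Finset.sum_congr rfl fun i _ => by simp only [Pi.smul_apply, smul_eq_mul]; ring

/-- positivity of any VI solution -/
lemma VI_pos {K : Set (ι → ℝ)} (hKconv : Convex ℝ K)
    (hKpos : ∀ x ∈ K, ∀ i, 0 ≤ x i)
    {yhat : ι → ℝ} (hyhatK : yhat ∈ K) (hyhatpos : ∀ i, 0 < yhat i)
    {lam : ℝ} (hlam : 0 < lam) (b : ι → ℝ) (L : Matrix ι ι ℝ)
    {x : ι → ℝ} (hx : x ∈ K)
    (hVI : ∀ y ∈ K, 0 ≤ lam * (ent y - ent x) + dot (b + L *ᵥ x) (y - x)) :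
    ∀ i, 0 < x i := by
  classical
  by_contra hcon
  push_neg at hcon
  obtain ⟨i0, hi0⟩ := hcon
  have hx0 : x i0 = 0 := le_antisymm hi0 (hKpos x hx i0)
  set w : ι → ℝ := yhat - x with hw
  set cd : ℝ := dot (b + L *ᵥ x) w with hcd
  set A : ℝ := (∑ i ∈ Finset.univ.erase i0,
    (yhat i * Real.log (yhat i) - x i * Real.log (x i)))
    + yhat i0 * Real.log (yhat i0) with hA
  -- key inequality for all t ∈ (0,1]
  have hkey : ∀ t : ℝ, 0 < t → t ≤ 1 →
      0 ≤ lam * A + lam * (yhat i0 * Real.log t) + cd := by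
    intro t ht0 ht1
    have hyt : x + t • w ∈ K := seg_mem hKconv hx hyhatK ht0.le ht1
    have h1 := hVI _ hyt
    have hdot : dot (b + L *ᵥ x) (x + t • w - x) = t * cd := by
      have : x + t • w - x = t • w := by funext i; simp
      rw [this, dot_smul_right, hcd]
    rw [hdot] at h1
    -- entropy bound
    have hentb : ent (x + t • w) - ent x ≤ t * A + t * (yhat i0 * Real.log t) := by
      have hsum1 : ent (x + t • w)
          = (∑ i ∈ Finset.univ.erase i0,
              (x + t • w) i * Real.log ((x + t • w) i))
            + (x + t • w) i0 * Real.log ((x + t • w) i0) := by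
        unfold ent
        rw [Finset.sum_erase_add _ _ (Finset.mem_univ i0)]
      have hsum2 : ent x
          = (∑ i ∈ Finset.univ.erase i0, x i * Real.log (x i))
            + x i0 * Real.log (x i0) := by
        unfold ent
        rw [Finset.sum_erase_add _ _ (Finset.mem_univ i0)]
      have hx00 : x i0 * Real.log (x i0) = 0 := by rw [hx0]; simp
      have hyti0 : (x + t • w) i0 = t * yhat i0 := by
        simp only [Pi.add_apply, Pi.smul_apply, hw, Pi.sub_apply, smul_eq_mul, hx0]
        ring
      have hi0term : (x + t • w) i0 * Real.log ((x + t • w) i0)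
          = t * (yhat i0 * Real.log (yhat i0)) + t * (yhat i0 * Real.log t) := by
        rw [hyti0, Real.log_mul (ne_of_gt ht0) (ne_of_gt (hyhatpos i0))]
        ring
      have herase : ∑ i ∈ Finset.univ.erase i0,
          (x + t • w) i * Real.log ((x + t • w) i)
          ≤ ∑ i ∈ Finset.univ.erase i0,
            (x i * Real.log (x i)
              + t * (yhat i * Real.log (yhat i) - x i * Real.log (x i))) := by
        refine Finset.sum_le_sum fun i _ => ?_
        have hyi : (x + t • w) i = (1 - t) * x i + t * yhat i := by
          simp only [Pi.add_apply, Pi.smul_apply, hw, Pi.sub_apply, smul_eq_mul]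
          ring
        rw [hyi]
        have hconv := Real.convexOn_mul_log.2 (Set.mem_Ici.2 (hKpos x hx i))
          (Set.mem_Ici.2 (hyhatpos i).le) (by linarith : (0:ℝ) ≤ 1 - t) ht0.le (by ring)
        simp only [smul_eq_mul] at hconv
        calc ((1 - t) * x i + t * yhat i) * Real.log ((1 - t) * x i + t * yhat i)
            ≤ (1 - t) * (x i * Real.log (x i)) + t * (yhat i * Real.log (yhat i)) := hconv
          _ = x i * Real.log (x i)
              + t * (yhat i * Real.log (yhat i) - x i * Real.log (x i)) := by ring
      have hsum3 : ∑ i ∈ Finset.univ.erase i0,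
          (x i * Real.log (x i)
            + t * (yhat i * Real.log (yhat i) - x i * Real.log (x i)))
          = (∑ i ∈ Finset.univ.erase i0, x i * Real.log (x i))
            + t * (∑ i ∈ Finset.univ.erase i0,
              (yhat i * Real.log (yhat i) - x i * Real.log (x i))) := by
        rw [Finset.sum_add_distrib, Finset.mul_sum]
      rw [hsum1, hsum2, hx00, hi0term, hA]
      have := le_trans herase (le_of_eq hsum3)
      linarith
    have h2 : 0 ≤ lam * (t * A + t * (yhat i0 * Real.log t)) + t * cd := by
      have := mul_le_mul_of_nonneg_left hentb hlam.le
      linarith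
    have h3 : 0 ≤ t * (lam * A + lam * (yhat i0 * Real.log t) + cd) := by linarith [h2]
    by_contra hneg
    push_neg at hneg
    nlinarith
  -- contradiction by taking t small
  set D : ℝ := (-(lam * A + cd) - 1) / (lam * yhat i0) with hD
  have hly : 0 < lam * yhat i0 := mul_pos hlam (hyhatpos i0)
  rcases le_or_gt (Real.exp D) 1 with h | h
  · have := hkey (Real.exp D) (Real.exp_pos D) h
    rw [Real.log_exp] at this
    have hDval : lam * (yhat i0 * D) = -(lam * A + cd) - 1 := by
      rw [hD]
      have hy0 : yhat i0 ≠ 0 := (hyhatpos i0).ne'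
      field_simp
    nlinarith
  · have := hkey 1 one_pos le_rfl
    rw [Real.log_one] at this
    have hD0 : 0 < D := by
      have := Real.exp_lt_exp.1 (by simpa using h : Real.exp 0 < Real.exp D)
      linarith [this]
    have hDneg : -(lam * A + cd) - 1 > 0 := by
      have := (div_pos_iff.1 (hD ▸ hD0)).resolve_right (fun ⟨h1, h2⟩ => absurd h2 (not_lt.2 hly.le))
      exact this.1
    simp only [mul_zero] at this
    linarith

/-- first-order optimality at a positive solution -/
lemma VI_firstorder {K : Set (ι → ℝ)} (hKconv : Convex ℝ K)
    {lam : ℝ} (hlam : 0 < lam) (b : ι → ℝ) (L : Matrix ι ι ℝ)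
    {x : ι → ℝ} (hx : x ∈ K) (hxpos : ∀ i, 0 < x i)
    (hVI : ∀ y ∈ K, 0 ≤ lam * (ent y - ent x) + dot (b + L *ᵥ x) (y - x))
    {y : ι → ℝ} (hy : y ∈ K) :
    0 ≤ lam * (∑ i, (Real.log (x i) + 1) * (y i - x i)) + dot (b + L *ᵥ x) (y - x) := by
  set w : ι → ℝ := y - x with hw
  set c : ℝ := dot (b + L *ᵥ x) w with hc
  set g : ℝ → ℝ := fun t => lam * ent (x + t • w) + t * c with hg
  -- g t ≥ g 0 for t ∈ (0,1]
  have hmono : ∀ t : ℝ, 0 < t → t ≤ 1 → g 0 ≤ g t := by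
    intro t ht0 ht1
    have hyt : x + t • w ∈ K := seg_mem hKconv hx hy ht0.le ht1
    have h1 := hVI _ hyt
    have hdot : dot (b + L *ᵥ x) (x + t • w - x) = t * c := by
      have heq : x + t • w - x = t • w := by funext i; simp
      rw [heq, dot_smul_right, hc]
    rw [hdot] at h1
    have hg0 : g 0 = lam * ent x := by
      rw [hg]
      have : x + (0:ℝ) • w = x := by funext i; simp
      simp [this]
    have hgt : g t = lam * ent (x + t • w) + t * c := rfl
    rw [hg0, hgt]
    linarith
  -- derivative of g at 0
  have hderiv : ∀ i : ι, HasDerivAt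
      (fun t : ℝ => (x i + t * w i) * Real.log (x i + t * w i))
      ((Real.log (x i) + 1) * w i) 0 := by
    intro i
    have h1 : HasDerivAt (fun t : ℝ => x i + t * w i) (w i) 0 := by
      simpa using ((hasDerivAt_id (0:ℝ)).mul_const (w i)).const_add (x i)
    have h2 : HasDerivAt (fun s : ℝ => s * Real.log s)
        (Real.log (x i + 0 * w i) + 1) (x i + 0 * w i) := by
      apply Real.hasDerivAt_mul_log
      simpa using (hxpos i).ne'
    have h3 := h2.comp (0:ℝ) h1
    simpa [Function.comp_def] using h3
  have hent : HasDerivAt (fun t : ℝ => ent (x + t • w))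
      (∑ i, (Real.log (x i) + 1) * w i) 0 := by
    have hsum := HasDerivAt.sum (fun i (_ : i ∈ Finset.univ) => hderiv i)
    have heq : (fun t : ℝ => ∑ i, (x i + t * w i) * Real.log (x i + t * w i))
        = fun t : ℝ => ent (x + t • w) := by
      funext t
      unfold ent
      exact Finset.sum_congr rfl fun i _ => by
        simp only [Pi.add_apply, Pi.smul_apply, smul_eq_mul]
    rw [Finset.sum_fn, heq] at hsum
    exact hsum
  have hgderiv : HasDerivAt g
      (lam * (∑ i, (Real.log (x i) + 1) * w i) + c) 0 := by
    have h4 : HasDerivAt (fun t : ℝ => t * c) c 0 := by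
      simpa using (hasDerivAt_id (0:ℝ)).mul_const c
    exact (hent.const_mul lam).add h4
  -- slope nonneg
  have hslope := hasDerivAt_iff_tendsto_slope.1 hgderiv
  have hmonoleft : nhdsWithin (0:ℝ) (Set.Ioi 0) ≤ nhdsWithin (0:ℝ) {(0:ℝ)}ᶜ :=
    nhdsWithin_mono 0 (fun t ht => ne_of_gt ht)
  have hslope' := hslope.mono_left hmonoleft
  have hnonneg : ∀ᶠ t in nhdsWithin (0:ℝ) (Set.Ioi 0), 0 ≤ slope g 0 t := by
    have hIoc : Set.Ioc (0:ℝ) 1 ∈ nhdsWithin (0:ℝ) (Set.Ioi 0) :=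
      Ioc_mem_nhdsGT_of_mem ⟨le_refl _, one_pos⟩
    filter_upwards [hIoc] with t ht
    have h5 := hmono t ht.1 ht.2
    rw [slope_def_field]
    have ht0 : 0 < t := ht.1
    have : 0 ≤ g t - g 0 := by linarith
    rw [div_nonneg_iff]
    left
    constructor
    · simpa using this
    · simpa using ht0.le
  have hge : 0 ≤ lam * (∑ i, (Real.log (x i) + 1) * w i) + c :=
    ge_of_tendsto hslope' hnonneg
  exact hge

/-- uniqueness of VI solutions -/
theorem VI_unique {K : Set (ι → ℝ)} (hKconv : Convex ℝ K)
    (hKpos : ∀ x ∈ K, ∀ i, 0 ≤ x i)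
    {yhat : ι → ℝ} (hyhatK : yhat ∈ K) (hyhatpos : ∀ i, 0 < yhat i)
    {lam : ℝ} (hlam : 0 < lam) (b : ι → ℝ) (L : Matrix ι ι ℝ)
    (hL : ∀ w, 0 ≤ dot (L *ᵥ w) w)
    {u v : ι → ℝ} (hu : u ∈ K) (hv : v ∈ K)
    (hUVI : ∀ y ∈ K, 0 ≤ lam * (ent y - ent u) + dot (b + L *ᵥ u) (y - u))
    (hVVI : ∀ y ∈ K, 0 ≤ lam * (ent y - ent v) + dot (b + L *ᵥ v) (y - v)) :
    u = v := by
  have hupos := VI_pos hKconv hKpos hyhatK hyhatpos hlam b L hu hUVI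
  have hvpos := VI_pos hKconv hKpos hyhatK hyhatpos hlam b L hv hVVI
  have h1 := VI_firstorder hKconv hlam b L hu hupos hUVI hv
  have h2 := VI_firstorder hKconv hlam b L hv hvpos hVVI hu
  -- sum identities
  have hS1 : (∑ i, (Real.log (u i) + 1) * (v i - u i))
      + (∑ i, (Real.log (v i) + 1) * (u i - v i))
      = -∑ i, (Real.log (v i) - Real.log (u i)) * (v i - u i) := by
    rw [← Finset.sum_add_distrib, ← Finset.sum_neg_distrib]
    exact Finset.sum_congr rfl fun i _ => by ring
  have hS2 : dot (b + L *ᵥ u) (v - u) + dot (b + L *ᵥ v) (u - v)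
      = -dot (L *ᵥ (u - v)) (u - v) := by
    rw [Matrix.mulVec_sub]
    unfold dot
    rw [← Finset.sum_add_distrib, ← Finset.sum_neg_distrib]
    refine Finset.sum_congr rfl fun i _ => ?_
    simp only [Pi.add_apply, Pi.sub_apply]
    ring
  have hq : ∀ i, 0 ≤ (Real.log (v i) - Real.log (u i)) * (v i - u i) := by
    intro i
    rcases le_total (u i) (v i) with h | h
    · have := Real.log_le_log (hupos i) h
      nlinarith
    · have := Real.log_le_log (hvpos i) h
      nlinarith
  have hsum0 : ∑ i, (Real.log (v i) - Real.log (u i)) * (v i - u i) = 0 := by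
    have hle : lam * (∑ i, (Real.log (v i) - Real.log (u i)) * (v i - u i))
        ≤ -dot (L *ᵥ (u - v)) (u - v) := by nlinarith [h1, h2, hS1, hS2]
    have hLuv := hL (u - v)
    have hge : 0 ≤ ∑ i, (Real.log (v i) - Real.log (u i)) * (v i - u i) :=
      Finset.sum_nonneg fun i _ => hq i
    nlinarith
  have heach : ∀ i ∈ Finset.univ,
      (Real.log (v i) - Real.log (u i)) * (v i - u i) = 0 := by
    exact (Finset.sum_eq_zero_iff_of_nonneg (fun i _ => hq i)).1 hsum0
  funext i
  have h3 := heach i (Finset.mem_univ i)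
  by_contra hne
  rcases lt_or_gt_of_ne hne with h | h
  · have := Real.log_lt_log (hupos i) h
    nlinarith
  · have := Real.log_lt_log (hvpos i) h
    nlinarith

end helpers


end Stmt9Aux

open Stmt9Aux


set_option maxHeartbeats 1000000 in
/-- the entropy-regularized atomic routing game has exactly one
Nash equilibrium `x = (x₁, …, x_p)`. -/
theorem stmt9 (n m p : ℕ) (hm : 0 < m) (hp : 0 < p)
    (E : Matrix (Fin (n + 1)) (Fin m) ℝ)
    (d : Fin p → Fin (n + 1)) (r : Fin p → Fin (n + 1) → ℝ)
    (b : Fin p → Fin m → ℝ)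
    (C : Fin p → Fin p → Matrix (Fin m) (Fin m) ℝ)
    (Ered : Fin p → Matrix (Fin n) (Fin m) ℝ)
    (hEred : ∀ i, Ered i = E.submatrix (d i).succAbove id)
    (s : Fin p → Fin n → ℝ)
    (hs : ∀ i, s i = fun j => r i ((d i).succAbove j))
    (P : Fin p → Set (Fin m → ℝ))
    (hP : ∀ i, P i = {y | Ered i *ᵥ y = s i ∧ ∀ k, 0 ≤ y k})
    (hPpos : ∀ i, ∃ y ∈ P i, ∀ k, 0 < y k)
    (lam : ℝ) (hlam : 0 < lam)
    (Cfull : Matrix (Fin p × Fin m) (Fin p × Fin m) ℝ)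
    (hCfull : Cfull = Matrix.of fun ik jl : Fin p × Fin m => C ik.1 jl.1 ik.2 jl.2)
    (hCpsd : (Cfull + Cfullᵀ).PosSemidef)
    (hCsym : ∀ i, (C i i)ᵀ = C i i)
    (cost : Fin p → (Fin p → Fin m → ℝ) → (Fin m → ℝ) → ℝ)
    (hcost : ∀ i x y, cost i x y =
      (b i + (1 / 2 : ℝ) • (C i i *ᵥ y) +
        ∑ j ∈ Finset.univ.erase i, C i j *ᵥ x j) ⬝ᵥ y +
      lam * ∑ k, y k * Real.log (y k)) :
    ∃! x : Fin p → Fin m → ℝ,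
      ∀ i, x i ∈ P i ∧ ∀ y ∈ P i, cost i x (x i) ≤ cost i x y := by
  classical
  -- properties of P
  have hPconv : ∀ i, Convex ℝ (P i) := by
    intro i
    rw [hP i]
    rintro y ⟨hy1, hy2⟩ z ⟨hz1, hz2⟩ a c ha hc hac
    constructor
    · rw [Matrix.mulVec_add, Matrix.mulVec_smul, Matrix.mulVec_smul, hy1, hz1,
        ← add_smul, hac, one_smul]
    · intro k
      simp only [Pi.add_apply, Pi.smul_apply, smul_eq_mul]
      exact add_nonneg (mul_nonneg ha (hy2 k)) (mul_nonneg hc (hz2 k))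
  have hPclosed : ∀ i, IsClosed (P i) := by
    intro i
    rw [hP i]
    have heq : {y : Fin m → ℝ | Ered i *ᵥ y = s i ∧ ∀ k, 0 ≤ y k}
        = ((fun y => Ered i *ᵥ y) ⁻¹' {s i}) ∩ ⋂ k, {y | 0 ≤ y k} := by
      ext y
      simp [Set.mem_iInter]
    rw [heq]
    exact (IsClosed.preimage (continuous_mulVec (Ered i)) isClosed_singleton).inter
      (isClosed_iInter fun k => isClosed_le continuous_const (continuous_apply k))
  have hPnonneg : ∀ i, ∀ y ∈ P i, ∀ k, 0 ≤ y k := by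
    intro i y hy
    rw [hP i] at hy
    exact hy.2
  -- the flattened feasible set
  set K : Set (Fin p × Fin m → ℝ) := {z | ∀ i, (fun k => z (i, k)) ∈ P i} with hK
  have hKc : IsClosed K := by
    have heq : K = ⋂ i, (fun (z : Fin p × Fin m → ℝ) (k : Fin m) => z (i, k)) ⁻¹' (P i) := by
      ext z
      simp [hK, Set.mem_iInter, Set.mem_preimage]
    rw [heq]
    refine isClosed_iInter fun i => IsClosed.preimage ?_ (hPclosed i)
    exact continuous_pi fun k => continuous_apply (i, k)
  have hKconv : Convex ℝ K := by
    intro z1 hz1 z2 hz2 a c ha hc hac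
    intro i
    have heq : (fun k => (a • z1 + c • z2) (i, k))
        = a • (fun k => z1 (i, k)) + c • (fun k => z2 (i, k)) := by
      funext k
      simp
    rw [heq]
    exact hPconv i (hz1 i) (hz2 i) ha hc hac
  have hKpos : ∀ z ∈ K, ∀ ik, 0 ≤ z ik := by
    intro z hz ik
    exact hPnonneg ik.1 _ (hz ik.1) ik.2
  -- positive point
  choose yh hyhP hyhpos using hPpos
  set yhat : Fin p × Fin m → ℝ := fun ik => yh ik.1 ik.2 with hyhat
  have hyhatK : yhat ∈ K := fun i => hyhP i
  have hyhatpos : ∀ ik, 0 < yhat ik := fun ik => hyhpos ik.1 ik.2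
  -- the operator
  set bb : Fin p × Fin m → ℝ := fun ik => b ik.1 ik.2 with hbb
  have hLmono : ∀ w, 0 ≤ dot (Cfull *ᵥ w) w := by
    intro w
    have h1 := (Matrix.posSemidef_iff_dotProduct_mulVec.mp hCpsd).2 w
    have hstar : star w = w := by
      funext i; simp
    rw [hstar, Matrix.add_mulVec, dotProduct_add] at h1
    have h2 : w ⬝ᵥ (Cfullᵀ *ᵥ w) = w ⬝ᵥ (Cfull *ᵥ w) := by
      rw [Matrix.mulVec_transpose, Matrix.dotProduct_mulVec]
      exact dotProduct_comm _ _
    rw [h2] at h1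
    have h3 : dot (Cfull *ᵥ w) w = w ⬝ᵥ (Cfull *ᵥ w) := by
      rw [dotProduct_comm]
      rfl
    rw [h3]
    linarith
  -- block structure lemmas
  have hblock : ∀ (z : Fin p × Fin m → ℝ) i k,
      (Cfull *ᵥ z) (i, k) = ∑ j, (C i j *ᵥ fun l => z (j, l)) k := by
    intro z i k
    rw [hCfull]
    show ∑ jl : Fin p × Fin m, C i jl.1 k jl.2 * z jl = _
    rw [Fintype.sum_prod_type]
    rfl
  have hentd : ∀ a : Fin p × Fin m → ℝ, ent a = ∑ i, ent (fun k => a (i, k)) := by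
    intro a
    unfold ent
    rw [Fintype.sum_prod_type]
  have hdotd : ∀ a c : Fin p × Fin m → ℝ,
      dot a c = ∑ i, (fun k => a (i, k)) ⬝ᵥ (fun k => c (i, k)) := by
    intro a c
    unfold dot
    rw [Fintype.sum_prod_type]
    rfl
  -- symmetric dot for diagonal blocks
  have hQsym : ∀ i (u w : Fin m → ℝ), (C i i *ᵥ w) ⬝ᵥ u = (C i i *ᵥ u) ⬝ᵥ w := by
    intro i u w
    have hQ : ∀ k l, C i i k l = C i i l k := by
      intro k l
      have h0 := congrFun (congrFun (hCsym i) l) k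
      rwa [Matrix.transpose_apply] at h0
    calc (C i i *ᵥ w) ⬝ᵥ u = ∑ k, ∑ l, C i i k l * w l * u k := by
          simp [Matrix.mulVec, dotProduct, Finset.sum_mul]
      _ = ∑ l, ∑ k, C i i k l * w l * u k := Finset.sum_comm
      _ = ∑ k, ∑ l, C i i k l * u l * w k := by
          refine Finset.sum_congr rfl fun a _ => Finset.sum_congr rfl fun c _ => ?_
          rw [hQ c a]
          ring
      _ = (C i i *ᵥ u) ⬝ᵥ w := by
          simp [Matrix.mulVec, dotProduct, Finset.sum_mul]
  -- positive semidefiniteness of diagonal blocks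
  have hQpsd : ∀ i (w : Fin m → ℝ), 0 ≤ (C i i *ᵥ w) ⬝ᵥ w := by
    intro i w
    set wf : Fin p × Fin m → ℝ := fun jk => if jk.1 = i then w jk.2 else 0 with hwf
    have h1 := hLmono wf
    have h2 : dot (Cfull *ᵥ wf) wf = (C i i *ᵥ w) ⬝ᵥ w := by
      rw [hdotd]
      have h3 : ∀ j, (fun k => (Cfull *ᵥ wf) (j, k)) ⬝ᵥ (fun k => wf (j, k))
          = if j = i then (C i i *ᵥ w) ⬝ᵥ w else 0 := by
        intro j
        by_cases hj : j = i
        · rw [hj, if_pos rfl]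
          have h4 : ∀ k, (Cfull *ᵥ wf) (i, k) = (C i i *ᵥ w) k := by
            intro k
            rw [hblock]
            have h5 : ∀ j', (C i j' *ᵥ fun l => wf (j', l))
                = if j' = i then C i i *ᵥ w else 0 := by
              intro j'
              by_cases hj' : j' = i
              · rw [hj', if_pos rfl]
                have : (fun l => wf (i, l)) = w := by
                  funext l
                  simp [hwf]
                rw [this]
              · rw [if_neg hj']
                have : (fun l => wf (j', l)) = (0 : Fin m → ℝ) := by
                  funext l
                  simp [hwf, hj']
                rw [this, Matrix.mulVec_zero]
            calc ∑ j', (C i j' *ᵥ fun l => wf (j', l)) k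
                = ∑ j', (if j' = i then (C i i *ᵥ w) k else 0) := by
                  refine Finset.sum_congr rfl fun j' _ => ?_
                  rw [h5 j']
                  split <;> simp
              _ = (C i i *ᵥ w) k := by
                  rw [Finset.sum_ite_eq' Finset.univ i fun _ => (C i i *ᵥ w) k]
                  simp
          have h6 : (fun k => (Cfull *ᵥ wf) (i, k)) = C i i *ᵥ w := funext h4
          have h7 : (fun k => wf (i, k)) = w := by
            funext k
            simp [hwf]
          rw [h6, h7]
        · simp only [hwf]
          have : (fun k => (if (j, k).1 = i then w (j, k).2 else 0)) = (0 : Fin m → ℝ) := by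
            funext k
            simp [hj]
          rw [if_neg hj]
          calc (fun k => (Cfull *ᵥ wf) (j, k)) ⬝ᵥ (fun k => if (j, k).1 = i then w (j, k).2 else 0)
              = (fun k => (Cfull *ᵥ wf) (j, k)) ⬝ᵥ (0 : Fin m → ℝ) := by rw [this]
            _ = 0 := dotProduct_zero _
      rw [Finset.sum_congr rfl fun j _ => h3 j, Finset.sum_ite_eq' Finset.univ i
        fun _ => (C i i *ᵥ w) ⬝ᵥ w]
      simp
    rw [h2] at h1
    exact h1
  -- cost expansion
  have costeq : ∀ i (x : Fin p → Fin m → ℝ) (y : Fin m → ℝ),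
      cost i x y = (b i + ∑ j ∈ Finset.univ.erase i, C i j *ᵥ x j) ⬝ᵥ y
        + 1 / 2 * ((C i i *ᵥ y) ⬝ᵥ y) + lam * ent y := by
    intro i x y
    rw [hcost i x y]
    have h1 : (b i + (1 / 2 : ℝ) • (C i i *ᵥ y) + ∑ j ∈ Finset.univ.erase i, C i j *ᵥ x j) ⬝ᵥ y
        = b i ⬝ᵥ y + (1/2) * ((C i i *ᵥ y) ⬝ᵥ y) + (∑ j ∈ Finset.univ.erase i, C i j *ᵥ x j) ⬝ᵥ y := by
      rw [add_dotProduct, add_dotProduct, smul_dotProduct]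
      simp [smul_eq_mul]
    rw [h1, add_dotProduct]
    unfold ent
    ring
  -- quadratic expansion
  have hquad : ∀ i (u w : Fin m → ℝ) (t : ℝ),
      (C i i *ᵥ (u + t • w)) ⬝ᵥ (u + t • w)
        = (C i i *ᵥ u) ⬝ᵥ u + 2 * t * ((C i i *ᵥ u) ⬝ᵥ w) + t ^ 2 * ((C i i *ᵥ w) ⬝ᵥ w) := by
    intro i u w t
    rw [Matrix.mulVec_add, Matrix.mulVec_smul, add_dotProduct, smul_dotProduct,
      dotProduct_add, dotProduct_add, dotProduct_smul,
      dotProduct_smul, hQsym i u w]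
    simp only [smul_eq_mul]
    ring
  -- full cost difference expansion
  have costdiff : ∀ i (x : Fin p → Fin m → ℝ) (u w : Fin m → ℝ) (t : ℝ),
      cost i x (u + t • w) - cost i x u
        = t * ((b i + ∑ j ∈ Finset.univ.erase i, C i j *ᵥ x j) ⬝ᵥ w)
          + t * ((C i i *ᵥ u) ⬝ᵥ w)
          + t ^ 2 * (1 / 2 * ((C i i *ᵥ w) ⬝ᵥ w))
          + lam * (ent (u + t • w) - ent u) := by
    intro i x u w t
    rw [costeq, costeq, hquad i u w t, dotProduct_add, dotProduct_smul]
    simp only [smul_eq_mul]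
    ring
  -- the "B" vector
  have hBvec : ∀ (x : Fin p → Fin m → ℝ) i,
      (fun k => (bb + Cfull *ᵥ fun ik : Fin p × Fin m => x ik.1 ik.2) (i, k))
        = b i + ∑ j ∈ Finset.univ.erase i, C i j *ᵥ x j + C i i *ᵥ x i := by
    intro x i
    funext k
    simp only [Pi.add_apply, hbb]
    rw [hblock]
    have h1 : ∑ j, (C i j *ᵥ fun l => x (j, l).1 (j, l).2) k = ∑ j, (C i j *ᵥ x j) k :=
      Finset.sum_congr rfl fun j _ => rfl
    rw [h1, ← Finset.sum_erase_add Finset.univ (fun j => (C i j *ᵥ x j) k)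
      (Finset.mem_univ i)]
    simp [Finset.sum_apply]
    ring
  -- per-player optimality implies block VI
  have key1 : ∀ (x : Fin p → Fin m → ℝ) i, x i ∈ P i →
      (∀ y ∈ P i, cost i x (x i) ≤ cost i x y) →
      ∀ yi ∈ P i, 0 ≤ lam * (ent yi - ent (x i))
        + (b i + ∑ j ∈ Finset.univ.erase i, C i j *ᵥ x j + C i i *ᵥ x i) ⬝ᵥ (yi - x i) := by
    intro x i hxi hopt yi hyi
    set u := x i with hu
    set w : Fin m → ℝ := yi - u with hw
    have hXrw : lam * (ent yi - ent u)
        + (b i + ∑ j ∈ Finset.univ.erase i, C i j *ᵥ x j + C i i *ᵥ u) ⬝ᵥ w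
        = lam * (ent yi - ent u)
          + ((b i + ∑ j ∈ Finset.univ.erase i, C i j *ᵥ x j) ⬝ᵥ w + (C i i *ᵥ u) ⬝ᵥ w) := by
      rw [add_dotProduct]
    rw [hXrw]
    refine nonneg_of_forall_small
      (q := 1 / 2 * ((C i i *ᵥ w) ⬝ᵥ w))
      (by have := hQpsd i w; linarith)
      ?_
    intro t ht0 ht1
    have hmem : u + t • w ∈ P i := seg_mem (hPconv i) hxi hyi ht0.le ht1
    have h1 := hopt _ hmem
    have h2 := costdiff i x u w t
    have hseg : ent (u + t • w) - ent u ≤ t * (ent yi - ent u) := by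
      have h3 := ent_segment (hPnonneg i u hxi) (hPnonneg i yi hyi) ht0.le ht1
      have heq2 : (1 - t) • u + t • yi = u + t • w := by
        funext k
        simp only [Pi.add_apply, Pi.smul_apply, Pi.sub_apply, hw, smul_eq_mul]
        ring
      rw [heq2] at h3
      linarith
    have h4 : lam * (ent (u + t • w) - ent u) ≤ lam * (t * (ent yi - ent u)) :=
      mul_le_mul_of_nonneg_left hseg hlam.le
    nlinarith [h1, h2, h4]
  -- block VI implies per-player optimality
  have key2 : ∀ (x : Fin p → Fin m → ℝ) i, x i ∈ P i →
      (∀ yi ∈ P i, 0 ≤ lam * (ent yi - ent (x i))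
        + (b i + ∑ j ∈ Finset.univ.erase i, C i j *ᵥ x j + C i i *ᵥ x i) ⬝ᵥ (yi - x i)) →
      ∀ y ∈ P i, cost i x (x i) ≤ cost i x y := by
    intro x i hxi hbvi y hy
    set u := x i with hu
    set w : Fin m → ℝ := y - u with hw
    have h1 := hbvi y hy
    have h2 := costdiff i x u w 1
    have heq3 : u + (1:ℝ) • w = y := by
      funext k
      simp [hw]
    rw [heq3] at h2
    have h5 := hQpsd i w
    have hXrw : (b i + ∑ j ∈ Finset.univ.erase i, C i j *ᵥ x j + C i i *ᵥ u) ⬝ᵥ w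
        = (b i + ∑ j ∈ Finset.univ.erase i, C i j *ᵥ x j) ⬝ᵥ w + (C i i *ᵥ u) ⬝ᵥ w := by
      rw [add_dotProduct]
    rw [hXrw] at h1
    nlinarith [h1, h2, h5]
  -- joint VI from blocks
  have joint_of_blocks : ∀ (x : Fin p → Fin m → ℝ),
      (∀ i, x i ∈ P i) →
      (∀ i, ∀ yi ∈ P i, 0 ≤ lam * (ent yi - ent (x i))
        + (b i + ∑ j ∈ Finset.univ.erase i, C i j *ᵥ x j + C i i *ᵥ x i) ⬝ᵥ (yi - x i)) →
      ∀ y ∈ K, 0 ≤ lam * (ent y - ent (fun ik : Fin p × Fin m => x ik.1 ik.2))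
        + dot (bb + Cfull *ᵥ fun ik : Fin p × Fin m => x ik.1 ik.2) (y - fun ik : Fin p × Fin m => x ik.1 ik.2) := by
    intro x hxP hblocks y hyK
    set z : Fin p × Fin m → ℝ := fun ik : Fin p × Fin m => x ik.1 ik.2 with hz
    have hsum : lam * (ent y - ent z) + dot (bb + Cfull *ᵥ z) (y - z)
        = ∑ i, (lam * (ent (fun k => y (i, k)) - ent (x i))
          + (b i + ∑ j ∈ Finset.univ.erase i, C i j *ᵥ x j + C i i *ᵥ x i)
            ⬝ᵥ ((fun k => y (i, k)) - x i)) := by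
      rw [hentd y, hentd z, hdotd, ← Finset.sum_sub_distrib, Finset.mul_sum,
        ← Finset.sum_add_distrib]
      refine Finset.sum_congr rfl fun i _ => ?_
      have he1 : ent (fun k => z (i, k)) = ent (x i) := rfl
      have he2 : (fun k => (bb + Cfull *ᵥ z) (i, k))
          = b i + ∑ j ∈ Finset.univ.erase i, C i j *ᵥ x j + C i i *ᵥ x i := hBvec x i
      have he3 : (fun k => (y - z) (i, k)) = (fun k => y (i, k)) - x i := by
        funext k
        simp [hz]
      rw [he1, ← he2, ← he3]
    rw [hsum]
    refine Finset.sum_nonneg fun i _ => ?_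
    exact hblocks i _ (hyK i)
  -- blocks from joint VI
  have blocks_of_joint : ∀ z ∈ K,
      (∀ y ∈ K, 0 ≤ lam * (ent y - ent z) + dot (bb + Cfull *ᵥ z) (y - z)) →
      ∀ i, ∀ yi ∈ P i, 0 ≤ lam * (ent yi - ent (fun k => z (i, k)))
        + (b i + ∑ j ∈ Finset.univ.erase i, C i j *ᵥ (fun k => z (j, k))
          + C i i *ᵥ (fun k => z (i, k))) ⬝ᵥ (yi - fun k => z (i, k)) := by
    intro z hzK hVI i yi hyi
    set x : Fin p → Fin m → ℝ := fun j k => z (j, k) with hx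
    set y : Fin p × Fin m → ℝ := fun jk => if jk.1 = i then yi jk.2 else z jk with hy
    have hyK : y ∈ K := by
      intro j
      by_cases hj : j = i
      · subst hj
        have : (fun k => y (j, k)) = yi := by
          funext k
          simp [hy]
        rw [this]
        exact hyi
      · have : (fun k => y (j, k)) = fun k => z (j, k) := by
          funext k
          simp [hy, hj]
        rw [this]
        exact hzK j
    have h1 := hVI y hyK
    have hzd : ∀ a c : Fin p × Fin m → ℝ,
        dot a c = ∑ j, (fun k => a (j, k)) ⬝ᵥ (fun k => c (j, k)) := hdotd
    have hsum : lam * (ent y - ent z) + dot (bb + Cfull *ᵥ z) (y - z)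
        = lam * (ent yi - ent (fun k => z (i, k)))
          + (b i + ∑ j ∈ Finset.univ.erase i, C i j *ᵥ (fun k => z (j, k))
            + C i i *ᵥ (fun k => z (i, k))) ⬝ᵥ (yi - fun k => z (i, k)) := by
      rw [hentd y, hentd z, hzd]
      have hterm : ∀ j, (lam * (ent (fun k => y (j, k)) - ent (fun k => z (j, k)))
          + (fun k => (bb + Cfull *ᵥ z) (j, k)) ⬝ᵥ (fun k => (y - z) (j, k)))
          = if j = i then lam * (ent yi - ent (fun k => z (i, k)))
            + (b i + ∑ j' ∈ Finset.univ.erase i, C i j' *ᵥ (fun k => z (j', k))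
              + C i i *ᵥ (fun k => z (i, k))) ⬝ᵥ (yi - fun k => z (i, k)) else 0 := by
        intro j
        by_cases hj : j = i
        · subst hj
          rw [if_pos rfl]
          have hy1 : (fun k => y (j, k)) = yi := by funext k; simp [hy]
          have hy2 : (fun k => (y - z) (j, k)) = yi - fun k => z (j, k) := by
            funext k
            simp [hy]
          have hy3 := hBvec x j
          rw [hy1, hy2, hy3]
        · rw [if_neg hj]
          have hy1 : (fun k => y (j, k)) = fun k => z (j, k) := by
            funext k; simp [hy, hj]
          have hy2 : (fun k => (y - z) (j, k)) = (0 : Fin m → ℝ) := by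
            funext k
            simp [hy, hj]
          rw [hy1, hy2, dotProduct_zero]
          ring
      have hsplit : lam * (∑ j, ent (fun k => y (j, k)) - ∑ j, ent (fun k => z (j, k)))
          + ∑ j, (fun k => (bb + Cfull *ᵥ z) (j, k)) ⬝ᵥ (fun k => (y - z) (j, k))
          = ∑ j, (lam * (ent (fun k => y (j, k)) - ent (fun k => z (j, k)))
            + (fun k => (bb + Cfull *ᵥ z) (j, k)) ⬝ᵥ (fun k => (y - z) (j, k))) := by
        rw [← Finset.sum_sub_distrib, Finset.mul_sum, Finset.sum_add_distrib]
      rw [hsplit, Finset.sum_congr rfl fun j _ => hterm j,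
        Finset.sum_ite_eq' Finset.univ i _]
      simp
    rw [hsum] at h1
    exact h1
  -- EXISTENCE AND UNIQUENESS
  obtain ⟨zstar, hzstarK, hzstarVI⟩ :=
    exists_VI hKc hKconv hKpos hyhatK hlam bb Cfull hLmono
  set xstar : Fin p → Fin m → ℝ := fun i k => zstar (i, k) with hxstar
  have hNash : ∀ i, xstar i ∈ P i ∧ ∀ y ∈ P i, cost i xstar (xstar i) ≤ cost i xstar y := by
    intro i
    have hmem : xstar i ∈ P i := hzstarK i
    refine ⟨hmem, ?_⟩
    apply key2 xstar i hmem
    intro yi hyi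
    exact blocks_of_joint zstar hzstarK hzstarVI i yi hyi
  refine ⟨xstar, hNash, ?_⟩
  intro x' hx'
  have hx'P : ∀ i, x' i ∈ P i := fun i => (hx' i).1
  have hx'K : (fun ik : Fin p × Fin m => x' ik.1 ik.2) ∈ K := fun i => hx'P i
  have hx'blocks : ∀ i, ∀ yi ∈ P i, 0 ≤ lam * (ent yi - ent (x' i))
      + (b i + ∑ j ∈ Finset.univ.erase i, C i j *ᵥ x' j + C i i *ᵥ x' i) ⬝ᵥ (yi - x' i) :=
    fun i => key1 x' i (hx'P i) (hx' i).2
  have hx'VI := joint_of_blocks x' hx'P hx'blocks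
  have heqz := VI_unique hKconv hKpos hyhatK hyhatpos hlam bb Cfull hLmono
    hx'K hzstarK hx'VI hzstarVI
  funext i
  funext k
  exact congrFun heqz (i, k)
end

section
/- Fix λ > 0, s ∈ ℝ^{p(n−1)}, C ∈ ℝ^{pm×pm}, E_{[1,p]} ∈ ℝ^{p(n−1)×pm}, b₀ ∈ ℝ^{pm}, x ∈ ℝ^{pm}, and v ∈ ℝ^{p(n−1)}. Let ψ : ℝ^{pm} → ℝ be differentiable at x. Suppose X : ℝ^{pm} → ℝ^{pm} and V : ℝ^{pm} → ℝ^{p(n−1)} are differentiable at b₀, satisfy X(b₀) = x and V(b₀) = v, and for all b in a neighborhood of b₀ satisfy s = E_{[1,p]}X(b) and X(b) = exp((1/λ)(E_{[1,p]}ᵀV(b) − b − C·X(b)) − 1_{pm}) (exp componentwise). Let D = diag(x) and let J be the block matrix [[I_{pm} + (1/λ)DC, −(1/λ)DE_{[1,p]}ᵀ], [−E_{[1,p]}, 0]]. If J is nonsingular, then the gradient at b₀ of the map b ↦ ψ(X(b)) equals −(1/λ)·[Dᵀ 0]·J^{−ᵀ}·[∇ψ(x); 0], where [∇ψ(x); 0]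 ∈ ℝ^{pm + p(n−1)} stacks ∇ψ(x) over the zero vector. -/
/-!
Differentiating the two equilibrium equations at `b₀` in the direction `e_k` gives, for
`dX = X'(b₀) e_k` and `dV = V'(b₀) e_k`, the constraint `E dX = 0` and, since `exp' = exp` and
`X(b₀) = x`, the relation `dX = D (λ⁻¹ (Eᵀ dV - e_k - C dX))`. Together they say
`J (dX, dV) = (-λ⁻¹ D e_k, 0)`, so `(dX, dV) = J⁻¹ (-λ⁻¹ D e_k, 0)`. By the chain rule the `k`-th
partial derivative of `ψ ∘ X` is `⟨∇ψ(x), dX⟩ = ⟨(∇ψ(x), 0), J⁻¹ (-λ⁻¹ D e_k, 0)⟩`, and moving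
`J⁻¹` to the other side as `J⁻ᵀ` gives the formula.
-/

open Matrix Filter Topology

section

variable {ι κ : Type*} [Fintype ι] [Fintype κ]

theorem dotProduct_sumElim_zero {R : Type*} [NonUnitalNonAssocSemiring R]
    (y : ι ⊕ κ → R) (a : ι → R) :
    y ⬝ᵥ Sum.elim a 0 = (fun i => y (Sum.inl i)) ⬝ᵥ a := by
  rw [← Sum.elim_comp_inl_inr y, sumElim_dotProduct_sumElim, dotProduct_zero, add_zero]
  rfl

variable [DecidableEq ι]

theorem dotProduct_mulVec_single_one {R : Type*} [CommSemiring R]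
    (w : ι → R) (D : Matrix ι ι R) (k : ι) :
    w ⬝ᵥ (D *ᵥ Pi.single k 1) = (Dᵀ *ᵥ w) k := by
  rw [mulVec_single_one, dotProduct_comm]
  rfl

theorem ContinuousLinearMap.apply_eq_dotProduct_single (ℓ : (ι → ℝ) →L[ℝ] ℝ) (w : ι → ℝ) :
    ℓ w = (fun j => ℓ (Pi.single j 1)) ⬝ᵥ w := by
  conv_lhs => rw [pi_eq_sum_univ' w]
  simp [dotProduct, mul_comm]

theorem fromBlocks_mulVec_sumElim_eq_of_linearized
    (lam : ℝ) (D C : Matrix ι ι ℝ) (B : Matrix ι κ ℝ) (E : Matrix κ ι ℝ)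
    {dX u : ι → ℝ} {dV : κ → ℝ}
    (hdX : dX = D *ᵥ (lam⁻¹ • (B *ᵥ dV - u - C *ᵥ dX))) (hE : E *ᵥ dX = 0) :
    fromBlocks (1 + lam⁻¹ • (D * C)) (-(lam⁻¹ • (D * B))) (-E) 0 *ᵥ Sum.elim dX dV =
      Sum.elim (-lam⁻¹ • (D *ᵥ u)) 0 := by
  rw [fromBlocks_mulVec, Sum.elim_comp_inl, Sum.elim_comp_inr]
  congr 1
  · rw [mulVec_smul, mulVec_sub, mulVec_sub, mulVec_mulVec, mulVec_mulVec] at hdX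
    rw [add_mulVec, one_mulVec, neg_mulVec, smul_mulVec, smul_mulVec]
    linear_combination (norm := module) hdX
  · simp [neg_mulVec, hE]

end

theorem fderiv_apply_of_eventually_eq_exp {ι F : Type*} [NormedAddCommGroup F] [NormedSpace ℝ F]
    {X g : F → ι → ℝ} {b₀ : F}
    (hX : DifferentiableAt ℝ X b₀) (hg : DifferentiableAt ℝ g b₀)
    (h : ∀ᶠ b in 𝓝 b₀, ∀ k, X b k = Real.exp (g b k)) (u : F) (k : ι) :
    fderiv ℝ X b₀ u k = X b₀ k * fderiv ℝ g b₀ u k := by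
  have hXk := hasFDerivAt_pi'.mp hX.hasFDerivAt k
  have hexp := ((hasFDerivAt_pi'.mp hg.hasFDerivAt k).exp).congr_of_eventuallyEq
    (h.mono fun b hb => hb k)
  have hdiff := DFunLike.congr_fun (hXk.unique hexp) u
  rw [h.self_of_nhds k]
  simpa using hdiff

section

variable {ι κ F : Type*} [Fintype ι] [Fintype κ] [NormedAddCommGroup F] [NormedSpace ℝ F]

theorem HasFDerivAt.const_mulVec {X : F → ι → ℝ} {X' : F →L[ℝ] ι → ℝ} {b₀ : F}
    (A : Matrix κ ι ℝ) (hX : HasFDerivAt X X' b₀) :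
    HasFDerivAt (fun b => A *ᵥ X b) (A.mulVecLin.toContinuousLinearMap.comp X') b₀ :=
  A.mulVecLin.toContinuousLinearMap.hasFDerivAt.comp b₀ hX

theorem mulVec_fderiv_eq_zero_of_eventually_eq {X : F → ι → ℝ} {b₀ : F}
    (A : Matrix κ ι ℝ) (s : κ → ℝ) (hX : DifferentiableAt ℝ X b₀)
    (h : ∀ᶠ b in 𝓝 b₀, A *ᵥ X b = s) (u : F) :
    A *ᵥ fderiv ℝ X b₀ u = 0 := by
  have hzero := (hX.hasFDerivAt.const_mulVec A).unique
    ((hasFDerivAt_const s b₀).congr_of_eventuallyEq h)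
  simpa using DFunLike.congr_fun hzero u

theorem fderiv_eq_diagonal_mulVec_of_eventually_eq_exp [DecidableEq ι]
    {X : (ι → ℝ) → ι → ℝ} {V : (ι → ℝ) → κ → ℝ} {b₀ : ι → ℝ}
    (lam : ℝ) (B : Matrix ι κ ℝ) (C : Matrix ι ι ℝ)
    (hX : DifferentiableAt ℝ X b₀) (hV : DifferentiableAt ℝ V b₀)
    (h : ∀ᶠ b in 𝓝 b₀, ∀ k,
      X b k = Real.exp (lam⁻¹ * ((B *ᵥ V b) k - b k - (C *ᵥ X b) k) - 1))
    (u : ι → ℝ) :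
    fderiv ℝ X b₀ u = diagonal (X b₀) *ᵥ
      (lam⁻¹ • (B *ᵥ fderiv ℝ V b₀ u - u - C *ᵥ fderiv ℝ X b₀ u)) := by
  have hg : HasFDerivAt (fun b => lam⁻¹ • (B *ᵥ V b - b - C *ᵥ X b) - 1)
      (lam⁻¹ • (B.mulVecLin.toContinuousLinearMap.comp (fderiv ℝ V b₀) -
        ContinuousLinearMap.id ℝ _ - C.mulVecLin.toContinuousLinearMap.comp (fderiv ℝ X b₀)))
      b₀ :=
    ((((hV.hasFDerivAt.const_mulVec B).sub (hasFDerivAt_id b₀)).sub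
      (hX.hasFDerivAt.const_mulVec C)).const_smul lam⁻¹).sub_const 1
  ext k
  rw [fderiv_apply_of_eventually_eq_exp hX hg.differentiableAt h, hg.fderiv, mulVec_diagonal]
  simp

end

theorem stmt14_general (n m p : ℕ)
    (lam : ℝ)
    (s : Fin (p * (n - 1)) → ℝ)
    (C : Matrix (Fin (p * m)) (Fin (p * m)) ℝ)
    (E : Matrix (Fin (p * (n - 1))) (Fin (p * m)) ℝ)
    (b₀ x : Fin (p * m) → ℝ)
    (ψ : (Fin (p * m) → ℝ) → ℝ) (hψ : DifferentiableAt ℝ ψ x)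
    (X : (Fin (p * m) → ℝ) → (Fin (p * m) → ℝ))
    (V : (Fin (p * m) → ℝ) → (Fin (p * (n - 1)) → ℝ))
    (hX : DifferentiableAt ℝ X b₀) (hV : DifferentiableAt ℝ V b₀)
    (hX0 : X b₀ = x)
    (heq : ∀ᶠ b in nhds b₀,
      s = E *ᵥ X b ∧
      ∀ k, X b k = Real.exp (lam⁻¹ * ((Eᵀ *ᵥ V b) k - b k - (C *ᵥ X b) k) - 1))
    (D : Matrix (Fin (p * m)) (Fin (p * m)) ℝ) (hD : D = Matrix.diagonal x)
    (J : Matrix (Fin (p * m) ⊕ Fin (p * (n - 1)))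
        (Fin (p * m) ⊕ Fin (p * (n - 1))) ℝ)
    (hJ : J = Matrix.fromBlocks
      (1 + lam⁻¹ • (D * C)) (-(lam⁻¹ • (D * Eᵀ))) (-E) 0)
    (hJns : IsUnit J.det)
    (gψ : Fin (p * m) → ℝ)
    (hgψ : gψ = fun j => fderiv ℝ ψ x (Pi.single j 1)) :
    ∀ k, fderiv ℝ (fun b => ψ (X b)) b₀ (Pi.single k 1) =
      (-(lam⁻¹) • (Dᵀ *ᵥ fun i => ((J⁻¹)ᵀ *ᵥ Sum.elim gψ 0) (Sum.inl i))) k := by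
  intro k
  set dX := fderiv ℝ X b₀ (Pi.single k 1)
  set dV := fderiv ℝ V b₀ (Pi.single k 1)
  have hE : E *ᵥ dX = 0 :=
    mulVec_fderiv_eq_zero_of_eventually_eq E s hX (heq.mono fun _ hb => hb.1.symm) _
  have hdX : dX = D *ᵥ (lam⁻¹ • (Eᵀ *ᵥ dV - Pi.single k 1 - C *ᵥ dX)) := by
    rw [hD, ← hX0]
    exact fderiv_eq_diagonal_mulVec_of_eventually_eq_exp lam Eᵀ C hX hV
      (heq.mono fun _ hb => hb.2) _
  have hsol : Sum.elim dX dV = J⁻¹ *ᵥ Sum.elim (-lam⁻¹ • (D *ᵥ Pi.single k 1)) 0 := by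
    have := J.invertibleOfIsUnitDet hJns
    exact (inv_mulVec_eq_vec
      (hJ ▸ fromBlocks_mulVec_sumElim_eq_of_linearized lam D C Eᵀ E hdX hE).symm).symm
  calc fderiv ℝ (fun b => ψ (X b)) b₀ (Pi.single k 1)
      = gψ ⬝ᵥ dX := by
        rw [fderiv_fun_comp b₀ (hX0 ▸ hψ) hX, ContinuousLinearMap.comp_apply,
          ContinuousLinearMap.apply_eq_dotProduct_single, hgψ, hX0]
    _ = Sum.elim gψ 0 ⬝ᵥ Sum.elim dX dV := by
        rw [sumElim_dotProduct_sumElim, zero_dotProduct, add_zero]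
    _ = ((J⁻¹)ᵀ *ᵥ Sum.elim gψ 0) ⬝ᵥ Sum.elim (-lam⁻¹ • (D *ᵥ Pi.single k 1)) 0 := by
        rw [hsol, dotProduct_mulVec, mulVec_transpose]
    _ = _ := by
        rw [dotProduct_sumElim_zero, dotProduct_smul, dotProduct_mulVec_single_one]
        rfl

/-- Theorem 2, gradient with respect to `b`: if `(X(b), V(b))`
solves the softmax equilibrium equations near `b₀`, with `X(b₀) = x`,
`V(b₀) = v`, `D = diag(x)`, and the block Jacobian
`J = [[I + (1/λ)DC, −(1/λ)DEᵀ], [−E, 0]]` nonsingular, then the gradient of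
`b ↦ ψ(X(b))` at `b₀` is `−(1/λ)·[Dᵀ 0]·J^{−ᵀ}·[∇ψ(x); 0]`. Gradients are
expressed componentwise via directional derivatives along `Pi.single k 1`. -/
theorem stmt14 (n m p : ℕ) (hn : 0 < n) (hm : 0 < m) (hp : 0 < p)
    (lam : ℝ) (hlam : 0 < lam)
    (s : Fin (p * (n - 1)) → ℝ)
    (C : Matrix (Fin (p * m)) (Fin (p * m)) ℝ)
    (E : Matrix (Fin (p * (n - 1))) (Fin (p * m)) ℝ)
    (b₀ x : Fin (p * m) → ℝ) (v : Fin (p * (n - 1)) → ℝ)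
    (ψ : (Fin (p * m) → ℝ) → ℝ) (hψ : DifferentiableAt ℝ ψ x)
    (X : (Fin (p * m) → ℝ) → (Fin (p * m) → ℝ))
    (V : (Fin (p * m) → ℝ) → (Fin (p * (n - 1)) → ℝ))
    (hX : DifferentiableAt ℝ X b₀) (hV : DifferentiableAt ℝ V b₀)
    (hX0 : X b₀ = x) (hV0 : V b₀ = v)
    (heq : ∀ᶠ b in nhds b₀,
      s = E *ᵥ X b ∧
      ∀ k, X b k = Real.exp (lam⁻¹ * ((Eᵀ *ᵥ V b) k - b k - (C *ᵥ X b) k) - 1))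
    (D : Matrix (Fin (p * m)) (Fin (p * m)) ℝ) (hD : D = Matrix.diagonal x)
    (J : Matrix (Fin (p * m) ⊕ Fin (p * (n - 1)))
        (Fin (p * m) ⊕ Fin (p * (n - 1))) ℝ)
    (hJ : J = Matrix.fromBlocks
      (1 + lam⁻¹ • (D * C)) (-(lam⁻¹ • (D * Eᵀ))) (-E) 0)
    (hJns : IsUnit J.det)
    (gψ : Fin (p * m) → ℝ)
    (hgψ : gψ = fun j => fderiv ℝ ψ x (Pi.single j 1)) :
    ∀ k, fderiv ℝ (fun b => ψ (X b)) b₀ (Pi.single k 1) =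
      (-(lam⁻¹) • (Dᵀ *ᵥ fun i => ((J⁻¹)ᵀ *ᵥ Sum.elim gψ 0) (Sum.inl i))) k :=
  stmt14_general n m p lam s C E b₀ x ψ hψ X V hX hV hX0 heq D hD J hJ hJns gψ hgψ
end
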